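/- arXiv:1504.04278 — 5 statements merged into one kernel-verified Lean document; each statement's English description precedes it below -/
import Mathlib

section
/- Every block of a uniquely C_t-saturated graph that has fewer than t vertices is a complete graph. -/
open SimpleGraph

/-- `G` has a cycle on `t` vertices (a cycle of length `t`). -/
def HasCycleOn {V : Type*} (G : SimpleGraph V) (t : ℕ) : Prop :=
  ∃ (v : V) (w : G.Walk v v), w.IsCycle ∧ w.length = t

/-- `c` is the edge set of some cycle on `t` vertices in `G`. -/
def IsCtEdgeSet {V : Type*} (G : SimpleGraph V) (t : ℕ) (c : Set (Sym2 V)) : Prop :=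
  ∃ (v : V) (w : G.Walk v v), w.IsCycle ∧ w.length = t ∧ {e | e ∈ w.edges} = c

/-- `G` is uniquely `C_t`-saturated: it has no cycle on `t` vertices, and adding any
edge of the complement creates exactly one cycle on `t` vertices. -/
def UniquelyCSat {V : Type*} (G : SimpleGraph V) (t : ℕ) : Prop :=
  ¬ HasCycleOn G t ∧
    ∀ x y : V, x ≠ y → ¬ G.Adj x y →
      ∃! c : Set (Sym2 V), IsCtEdgeSet (G ⊔ fromEdgeSet {s(x, y)}) t c
/-- The set `s` induces a block of `G`: a maximal set of vertices inducing a
connected subgraph with no cut-vertex. -/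
def IsBlock {V : Type*} (G : SimpleGraph V) (s : Set V) : Prop :=
  s.Nonempty ∧ (G.induce s).Connected ∧
    (∀ v ∈ s, (G.induce (s \ {v})).Preconnected) ∧
    ∀ u : Set V, s ⊆ u →
      ((G.induce u).Connected ∧ ∀ v ∈ u, (G.induce (u \ {v})).Preconnected) → u = s

/-!
Suppose two vertices `a`, `b` of a block `B` are not adjacent. Adding `ab` creates a `C_t`,
and since `G` itself has no `C_t`, this cycle passes through `ab`; deleting that edge leaves
an `a`–`b` path of `G` on `t` vertices. Attaching a path between two distinct vertices of a
2-connected set creates no cut-vertex (every new vertex reaches an end of the path without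
meeting the deleted vertex), so by maximality of `B` the path lies in `B`, and `|B| ≥ t`.
-/

namespace SimpleGraph

variable {V : Type*} {G : SimpleGraph V}

namespace Walk

lemma IsPath.notMem_support_dropUntil_of_mem_support_takeUntil [DecidableEq V] {u v x y : V}
    {p : G.Walk u v} (hp : p.IsPath) (hx : x ∈ p.support)
    (hy : y ∈ (p.takeUntil x hx).support) (hyx : y ≠ x) : y ∉ (p.dropUntil x hx).support := by
  intro hy'
  have hnodup := hp.support_nodup
  rw [← p.take_spec hx, support_append] at hnodup
  rw [← cons_tail_support, List.mem_cons] at hy'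
  exact List.disjoint_of_nodup_append hnodup hy (hy'.resolve_left hyx)

lemma IsPath.exists_walk_to_endpoint_avoiding {u v x y : V} {p : G.Walk u v} (hp : p.IsPath)
    (hx : x ∈ p.support) (hyx : y ≠ x) :
    ∃ e, (e = u ∨ e = v) ∧ ∃ q : G.Walk x e, ∀ z ∈ q.support, z ∈ p.support ∧ z ≠ y := by
  classical
  by_cases hy : y ∈ (p.takeUntil x hx).support
  · refine ⟨v, .inr rfl, p.dropUntil x hx,
      fun z hz => ⟨p.support_dropUntil_subset_support hx hz, ?_⟩⟩
    rintro rfl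
    exact hp.notMem_support_dropUntil_of_mem_support_takeUntil hx hy hyx hz
  · refine ⟨u, .inl rfl, (p.takeUntil x hx).reverse, fun z hz => ?_⟩
    rw [support_reverse, List.mem_reverse] at hz
    exact ⟨p.support_takeUntil_subset_support hx hz, by rintro rfl; exact hy hz⟩

lemma IsPath.length_lt_ncard {s : Set V} (hs : s.Finite) {u v : V} {p : G.Walk u v}
    (hp : p.IsPath) (hps : {z | z ∈ p.support} ⊆ s) : p.length < s.ncard := by
  classical
  have hcard : {z | z ∈ p.support}.ncard = p.length + 1 := by
    rw [show {z | z ∈ p.support} = (p.support.toFinset : Set V) by ext; simp,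
      Set.ncard_coe_finset, List.toFinset_card_of_nodup hp.support_nodup, length_support]
  have := Set.ncard_le_ncard hps hs
  omega

lemma IsCycle.exists_isPath_of_mem_darts {u x y : V} {c : G.Walk u u} (hc : c.IsCycle)
    (h : G.Adj x y) (hd : ⟨(x, y), h⟩ ∈ c.darts) :
    ∃ q : G.Walk y x, q.IsPath ∧ s(x, y) ∉ q.edges ∧ q.length + 1 = c.length := by
  classical
  have hx : x ∈ c.support := c.dart_fst_mem_support_of_mem_darts hd
  have hc' := hc.rotate hx
  have hd' : ⟨(x, y), h⟩ ∈ (c.rotate x hx).darts := (c.rotate_darts x hx).mem_iff.mpr hd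
  rw [← c.length_rotate x hx]
  -- After rotating to start at `x`, the dart is the first one: `x` is the tail of no other dart.
  generalize c.rotate x hx = c' at hc' hd'
  cases c' with
  | nil => simp at hd'
  | cons h' q =>
    obtain ⟨hq, hxq⟩ := (cons_isCycle_iff q h').mp hc'
    have hfst : x ∉ q.darts.map (·.fst) := by
      have := hc'.nodup_dropLast_support
      rw [← map_fst_darts, darts_cons, List.map_cons] at this
      exact (List.nodup_cons.mp this).1
    rw [darts_cons, List.mem_cons] at hd'
    rcases hd' with hd' | hd'
    · obtain rfl : y = _ := congrArg (·.toProd.2) hd'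
      exact ⟨q, hq, hxq, rfl⟩
    · exact absurd (List.mem_map_of_mem hd') hfst

lemma IsCycle.exists_isPath_of_mem_edges {u a b : V} {c : G.Walk u u} (hc : c.IsCycle)
    (he : s(a, b) ∈ c.edges) :
    ∃ q : G.Walk a b, q.IsPath ∧ s(a, b) ∉ q.edges ∧ q.length + 1 = c.length := by
  obtain ⟨⟨⟨x, y⟩, h⟩, hd, hxy⟩ := List.mem_map.mp he
  obtain ⟨q, hq, hqe, hlen⟩ := hc.exists_isPath_of_mem_darts h hd
  rcases Sym2.eq_iff.mp hxy with ⟨rfl, rfl⟩ | ⟨rfl, rfl⟩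
  · exact ⟨q.reverse, hq.reverse, by simpa [Sym2.eq_swap] using hqe, by simpa using hlen⟩
  · exact ⟨q, hq, by rwa [Sym2.eq_swap], hlen⟩

lemma edges_subset_edgeSet_of_notMem_sup_fromEdgeSet {u v : V} {e : Sym2 V}
    (p : (G ⊔ fromEdgeSet {e}).Walk u v) (he : e ∉ p.edges) : ∀ e' ∈ p.edges, e' ∈ G.edgeSet := by
  intro e' he'
  have h := p.edges_subset_edgeSet he'
  rw [edgeSet_sup, edgeSet_fromEdgeSet] at h
  rcases h with h | ⟨rfl, -⟩
  · exact h
  · exact absurd he' he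

end Walk

lemma preconnected_induce_union_support_diff {s : Set V} (hconn : (G.induce s).Preconnected)
    (hcut : ∀ v ∈ s, (G.induce (s \ {v})).Preconnected) {a b : V} (ha : a ∈ s) (hb : b ∈ s)
    (hab : a ≠ b) {p : G.Walk a b} (hp : p.IsPath) (v : V) :
    (G.induce ((s ∪ {z | z ∈ p.support}) \ {v})).Preconnected := by
  have hsv : (G.induce (s \ {v})).Preconnected := by
    by_cases hv : v ∈ s
    · exact hcut v hv
    · rwa [Set.sdiff_singleton_eq_self hv]
  obtain ⟨c, hcs, hcv⟩ : ∃ c ∈ s, c ≠ v := by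
    by_cases hav : a = v
    · exact ⟨b, hb, hav ▸ hab.symm⟩
    · exact ⟨a, ha, hav⟩
  refine Connected.preconnected (induce_connected_of_patches c ⟨.inl hcs, hcv⟩ ?_)
  rintro x ⟨hx | hx, hxv⟩
  · exact ⟨s \ {v}, Set.sdiff_subset_sdiff_left Set.subset_union_left, ⟨hcs, hcv⟩, ⟨hx, hxv⟩,
      hsv _ _⟩
  obtain ⟨e, he, q, hq⟩ := hp.exists_walk_to_endpoint_avoiding hx (Ne.symm hxv)
  have hes : e ∈ s := he.elim (· ▸ ha) (· ▸ hb)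
  refine ⟨s \ {v} ∪ {z | z ∈ q.support}, ?_, .inl ⟨hcs, hcv⟩, .inr q.start_mem_support, ?_⟩
  · rintro z (⟨hzs, hzv⟩ | hz)
    · exact ⟨.inl hzs, hzv⟩
    · exact ⟨.inr (hq z hz).1, (hq z hz).2⟩
  · exact induce_union_connected hsv q.connected_induce_support.preconnected
      ⟨e, ⟨hes, (hq e q.end_mem_support).2⟩, q.end_mem_support⟩ _ _

end SimpleGraph

lemma IsBlock.support_subset_of_isPath {V : Type*} {G : SimpleGraph V} {s : Set V}
    (hs : IsBlock G s) {a b : V} (ha : a ∈ s) (hb : b ∈ s) (hab : a ≠ b) {p : G.Walk a b}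
    (hp : p.IsPath) : {z | z ∈ p.support} ⊆ s := by
  obtain ⟨-, hconn, hcut, hmax⟩ := hs
  have hunion := hmax _ Set.subset_union_left
    ⟨induce_union_connected hconn.preconnected p.connected_induce_support.preconnected
      ⟨a, ha, p.start_mem_support⟩,
    fun v _ => preconnected_induce_union_support_diff hconn.preconnected hcut ha hb hab hp v⟩
  exact hunion ▸ Set.subset_union_right

/-- Every block with fewer than `t` vertices in a uniquely `C_t`-saturated graph is a
complete graph. -/
theorem stmt_1 {V : Type*} [Fintype V] (G : SimpleGraph V) (t : ℕ)
    (hG : UniquelyCSat G t) (s : Set V) (hs : IsBlock G s) (hcard : s.ncard < t) :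
    ∀ a ∈ s, ∀ b ∈ s, a ≠ b → G.Adj a b := by
  intro a ha b hb hab
  by_contra hadj
  obtain ⟨-, ⟨u, c, hc, hlen, -⟩, -⟩ := hG.2 a b hab hadj
  by_cases he : s(a, b) ∈ c.edges
  · obtain ⟨q, hq, hqe, hqlen⟩ := hc.exists_isPath_of_mem_edges he
    have hqG := q.edges_subset_edgeSet_of_notMem_sup_fromEdgeSet hqe
    have hpath := hq.transfer hqG
    have hlt := hpath.length_lt_ncard s.toFinite (hs.support_subset_of_isPath ha hb hab hpath)
    rw [Walk.length_transfer] at hlt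
    omega
  · exact hG.1 ⟨u, c.transfer G (c.edges_subset_edgeSet_of_notMem_sup_fromEdgeSet he),
      hc.transfer _, by rw [Walk.length_transfer, hlen]⟩
end

section
/- For t ≥ 6, in a uniquely C_t-saturated graph with at least t vertices, no two blocks sharing a common cut-vertex are both complete graphs. -/
open SimpleGraph

section Helpers

variable {V : Type*} {G : SimpleGraph V}


private lemma reach_induce {u : Set V} : ∀ {x y : V} (W : G.Walk x y)
    (h : ∀ v ∈ W.support, v ∈ u) (hx : x ∈ u) (hy : y ∈ u),
    (G.induce u).Reachable ⟨x, hx⟩ ⟨y, hy⟩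
  | x, _, Walk.nil, _, _, _ => Reachable.refl _
  | x, y, Walk.cons (v := z) ha W', h, hx, hy => by
      have hz : z ∈ u := h z (by simp)
      have hadj : (G.induce u).Adj ⟨x, hx⟩ ⟨z, hz⟩ := ha
      exact hadj.reachable.trans
        (reach_induce W' (fun v hv => h v (by simp [hv])) hz hy)

private lemma preconnected_of_reach {H : SimpleGraph V} {u : Set V} {w₀ : V} (hw₀ : w₀ ∈ u)
    (h : ∀ z (hz : z ∈ u), (H.induce u).Reachable ⟨z, hz⟩ ⟨w₀, hw₀⟩) :
    (H.induce u).Preconnected :=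
  fun p q => (h p.1 p.2).trans (h q.1 q.2).symm

private lemma takeUntil_dropUntil_eq [DecidableEq V] {x y z w : V} {p : G.Walk x y}
    (hp : p.IsPath) (hz : z ∈ p.support)
    (h1 : w ∈ (p.takeUntil z hz).support) (h2 : w ∈ (p.dropUntil z hz).support) : w = z := by
  have hnd : ((p.takeUntil z hz).support ++ (p.dropUntil z hz).support.tail).Nodup := by
    rw [← Walk.support_append, Walk.take_spec]
    exact hp.support_nodup
  have h2' : w ∈ z :: (p.dropUntil z hz).support.tail := by
    rwa [← Walk.support_eq_cons]
  rcases List.mem_cons.mp h2' with rfl | h2'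
  · rfl
  · exact absurd h2' (List.disjoint_of_nodup_append hnd h1)


private lemma reach_endpoints [DecidableEq V] {x y z v : V} {p : G.Walk x y}
    (hp : p.IsPath) (hz : z ∈ p.support) (hzv : z ≠ v) :
    ∃ q, (q = x ∨ q = y) ∧ ∃ (Wq : G.Walk z q), ∀ w ∈ Wq.support, w ∈ p.support ∧ w ≠ v := by
  by_cases hv : v ∈ p.support
  · rcases (Walk.mem_support_append_iff _ _).mp
      (by rw [Walk.take_spec p hv]; exact hz) with hzt | hzd
    · refine ⟨x, Or.inl rfl, ((p.takeUntil v hv).takeUntil z hzt).reverse, fun w hw => ?_⟩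
      rw [Walk.support_reverse, List.mem_reverse] at hw
      have hsub : w ∈ (p.takeUntil v hv).support :=
        Walk.support_takeUntil_subset _ _ hw
      refine ⟨Walk.support_takeUntil_subset _ _ hsub, fun hwv => ?_⟩
      subst hwv
      exact hzv (takeUntil_dropUntil_eq (hp.takeUntil hv) hzt hw
        (Walk.end_mem_support _)).symm
    · refine ⟨y, Or.inr rfl, (p.dropUntil v hv).dropUntil z hzd, fun w hw => ?_⟩
      have hsub : w ∈ (p.dropUntil v hv).support :=
        Walk.support_dropUntil_subset _ _ hw
      refine ⟨Walk.support_dropUntil_subset _ _ hsub, fun hwv => ?_⟩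
      subst hwv
      exact hzv (takeUntil_dropUntil_eq (hp.dropUntil hv) hzd
        (Walk.start_mem_support _) hw).symm
  · refine ⟨y, Or.inr rfl, p.dropUntil z hz, fun w hw => ?_⟩
    have hsub : w ∈ p.support := Walk.support_dropUntil_subset _ _ hw
    exact ⟨hsub, fun hwv => hv (hwv ▸ hsub)⟩

private lemma first_return {s : Set V} {x y : V} (W : G.Walk x y) (hy : y ∈ s) :
    ∃ (q : V), q ∈ s ∧ ∃ (R : G.Walk x q) (Rest : G.Walk q y),
      W = R.append Rest ∧ ∀ v ∈ R.support, v ≠ q → v ∉ s := by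
  induction W with
  | nil => exact ⟨_, hy, Walk.nil, Walk.nil, rfl, by simp⟩
  | @cons xx zz yy h W' ih =>
    by_cases hx : xx ∈ s
    · exact ⟨xx, hx, Walk.nil, Walk.cons h W', rfl, by simp⟩
    · obtain ⟨q, hq, R, Rest, hW, hR⟩ := ih hy
      refine ⟨q, hq, Walk.cons h R, Rest, by rw [hW, Walk.cons_append], ?_⟩
      intro v hv hvq
      rcases List.mem_cons.mp (by simpa using hv) with rfl | hv'
      · exact hx
      · exact hR v hv' hvq

private lemma master {s₁ s₂ : Set V} (hs₁ : IsBlock G s₁) (hs₂ : IsBlock G s₂) (hne : s₁ ≠ s₂)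
    (hcomp₁ : ∀ x ∈ s₁, ∀ y ∈ s₁, x ≠ y → G.Adj x y)
    (hcomp₂ : ∀ x ∈ s₂, ∀ y ∈ s₂, x ≠ y → G.Adj x y)
    {a b c₀ : V} (ha : a ∈ s₁) (hb : b ∈ s₂) (hc₁ : c₀ ∈ s₁) (hc₂ : c₀ ∈ s₂)
    (P : G.Walk a b) (hP : P.IsPath) (hcP : c₀ ∉ P.support) : False := by
  classical
  set U : Set V := (s₁ ∪ s₂) ∪ {v | v ∈ P.support} with hU
  have hUs₁ : s₁ ⊆ U := fun z hz => Or.inl (Or.inl hz)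
  have hUs₂ : s₂ ⊆ U := fun z hz => Or.inl (Or.inr hz)
  have hUP : ∀ z ∈ P.support, z ∈ U := fun z hz => Or.inr hz
  have hUmem : ∀ z, z ∈ U → z ∈ s₁ ∨ z ∈ s₂ ∨ z ∈ P.support := by
    intro z hz
    rcases hz with (h | h) | h
    exacts [Or.inl h, Or.inr (Or.inl h), Or.inr (Or.inr h)]
  have hac : a ≠ c₀ := fun h => hcP (h ▸ P.start_mem_support)
  have hbc : b ≠ c₀ := fun h => hcP (h ▸ P.end_mem_support)
  have step : ∀ (u' : Set V) (z w : V) (hz : z ∈ u') (hw : w ∈ u'), (z = w ∨ G.Adj z w) →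
      (G.induce u').Reachable ⟨z, hz⟩ ⟨w, hw⟩ := by
    intro u' z w hz hw h
    rcases h with rfl | h
    · exact Reachable.refl _
    · exact SimpleGraph.Adj.reachable h
  have step₁ : ∀ (u' : Set V) (z w : V) (hz' : z ∈ s₁) (hw' : w ∈ s₁)
      (hz : z ∈ u') (hw : w ∈ u'),
      (G.induce u').Reachable ⟨z, hz⟩ ⟨w, hw⟩ := by
    intro u' z w hz' hw' hz hw
    by_cases hzw : z = w
    · exact step u' z w hz hw (Or.inl hzw)
    · exact step u' z w hz hw (Or.inr (hcomp₁ z hz' w hw' hzw))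
  have step₂ : ∀ (u' : Set V) (z w : V) (hz' : z ∈ s₂) (hw' : w ∈ s₂)
      (hz : z ∈ u') (hw : w ∈ u'),
      (G.induce u').Reachable ⟨z, hz⟩ ⟨w, hw⟩ := by
    intro u' z w hz' hw' hz hw
    by_cases hzw : z = w
    · exact step u' z w hz hw (Or.inl hzw)
    · exact step u' z w hz hw (Or.inr (hcomp₂ z hz' w hw' hzw))
  -- connectivity of U itself
  have hconn : (G.induce U).Connected := by
    rw [connected_iff]
    have haU : a ∈ U := hUs₁ ha
    refine ⟨preconnected_of_reach haU ?_, ⟨⟨a, haU⟩⟩⟩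
    intro z hz
    have reachP : ∀ w (hw : w ∈ P.support) (hw' : w ∈ U),
        (G.induce U).Reachable ⟨w, hw'⟩ ⟨a, haU⟩ := by
      intro w hw hw'
      refine reach_induce (P.takeUntil w hw).reverse ?_ hw' haU
      intro vv hvv
      rw [Walk.support_reverse, List.mem_reverse] at hvv
      exact hUP _ (Walk.support_takeUntil_subset _ _ hvv)
    rcases hUmem z hz with h1 | h2 | hP'
    · exact step₁ U z a h1 ha hz haU
    · exact (step₂ U z b h2 hb hz (hUP b P.end_mem_support)).trans
        (reachP b P.end_mem_support _)
    · exact reachP z hP' hz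
  -- preconnectivity after removing any vertex
  have hprop : ∀ v ∈ U, (G.induce (U \ {v})).Preconnected := by
    intro v hv
    have hmem' : ∀ z vv, z ∈ U → z ≠ vv → z ∈ U \ {vv} := by
      intro z vv h1 h2; exact ⟨h1, by simpa using h2⟩
    by_cases hvc : v = c₀
    · rw [hvc]
      have haU : a ∈ U \ {c₀} := hmem' a c₀ (hUs₁ ha) hac
      refine preconnected_of_reach haU ?_
      intro z hz
      obtain ⟨hzU, hzc⟩ := hz
      have hzc' : z ≠ c₀ := by simpa using hzc
      have reachP : ∀ w (hw : w ∈ P.support) (hw' : w ∈ U \ {c₀}),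
          (G.induce (U \ {c₀})).Reachable ⟨w, hw'⟩ ⟨a, haU⟩ := by
        intro w hw hw'
        refine reach_induce (P.takeUntil w hw).reverse ?_ hw' haU
        intro vv hvv
        rw [Walk.support_reverse, List.mem_reverse] at hvv
        have hvv' := Walk.support_takeUntil_subset _ _ hvv
        exact hmem' vv c₀ (hUP _ hvv') (fun h => hcP (h ▸ hvv'))
      rcases hUmem z hzU with h1 | h2 | hP'
      · exact step₁ _ z a h1 ha _ haU
      · have hbU : b ∈ U \ {c₀} := hmem' b c₀ (hUs₂ hb) hbc
        exact (step₂ _ z b h2 hb _ hbU).trans (reachP b P.end_mem_support _)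
      · exact reachP z hP' _
    · have hcv : c₀ ≠ v := fun h => hvc h.symm
      have hcU : c₀ ∈ U \ {v} := hmem' c₀ v (hUs₁ hc₁) hcv
      refine preconnected_of_reach hcU ?_
      intro z hz
      obtain ⟨hzU, hzv⟩ := hz
      have hzv' : z ≠ v := by simpa using hzv
      rcases hUmem z hzU with h1 | h2 | hP'
      · exact step₁ _ z c₀ h1 hc₁ _ hcU
      · exact step₂ _ z c₀ h2 hc₂ _ hcU
      · obtain ⟨q, hq, Wq, hWq⟩ := reach_endpoints hP hP' hzv'
        have hWq' : ∀ w ∈ Wq.support, w ∈ U \ {v} := by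
          intro w hw
          exact hmem' w v (hUP w (hWq w hw).1) (hWq w hw).2
        have hqU : q ∈ U \ {v} := hWq' q Wq.end_mem_support
        have hreach := reach_induce Wq hWq' (hWq' z Wq.start_mem_support) hqU
        rcases hq with rfl | rfl
        · exact hreach.trans (step₁ _ q c₀ ha hc₁ _ hcU)
        · exact hreach.trans (step₂ _ q c₀ hb hc₂ _ hcU)
  have hfin₁ : U = s₁ := hs₁.2.2.2 U hUs₁ ⟨hconn, hprop⟩
  have hfin₂ : U = s₂ := hs₂.2.2.2 U hUs₂ ⟨hconn, hprop⟩
  exact hne (hfin₁.symm.trans hfin₂)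

private lemma path_subset_block {s₁ : Set V} (hs₁ : IsBlock G s₁)
    (hcomp₁ : ∀ x ∈ s₁, ∀ y ∈ s₁, x ≠ y → G.Adj x y) :
    ∀ {x y : V} (T : G.Walk x y), T.IsPath → x ∈ s₁ → y ∈ s₁ → ∀ v ∈ T.support, v ∈ s₁ := by
  classical
  intro x y T
  induction T with
  | nil =>
    intro _ hx _ v hv
    rw [Walk.support_nil, List.mem_singleton] at hv
    exact hv ▸ hx
  | @cons xx zz yy h T' ih =>
    intro hT hx hy v hv
    by_cases hz : zz ∈ s₁
    · rcases List.mem_cons.mp (by simpa using hv) with rfl | hv'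
      · exact hx
      · exact ih hT.of_cons hz hy v hv'
    · exfalso
      obtain ⟨q, hq, R, Rest, hT'eq, hRout⟩ := first_return T' hy
      have hT'path : T'.IsPath := hT.of_cons
      have hRpath : R.IsPath := by
        apply Walk.IsPath.of_append_left (q := Rest)
        rw [← hT'eq]; exact hT'path
      have hxxT' : xx ∉ T'.support := ((Walk.cons_isPath_iff h T').mp hT).2
      have hRsubT' : ∀ w ∈ R.support, w ∈ T'.support := by
        intro w hw
        rw [hT'eq]
        exact Walk.subset_support_append_left _ _ hw
      have hxxR : xx ∉ R.support := fun hc => hxxT' (hRsubT' _ hc)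
      have hseg : (Walk.cons h R).IsPath := hRpath.cons hxxR
      have hxq : xx ≠ q := fun hc => hxxT' (hRsubT' _ (hc ▸ R.end_mem_support))
      -- the bump set
      set U : Set V := s₁ ∪ {w | w ∈ (Walk.cons h R).support} with hU
      have hUs₁ : s₁ ⊆ U := fun w hw => Or.inl hw
      have hUseg : ∀ w ∈ (Walk.cons h R).support, w ∈ U := fun w hw => Or.inr hw
      have hxxU : xx ∈ U := hUseg xx (Walk.start_mem_support _)
      have hqU : q ∈ U := hUs₁ hq
      have hmem' : ∀ z vv, z ∈ U → z ≠ vv → z ∈ U \ {vv} := by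
        intro z vv h1 h2; exact ⟨h1, by simpa using h2⟩
      have step₁ : ∀ (u' : Set V) (z w : V) (hz' : z ∈ s₁) (hw' : w ∈ s₁)
          (hzu : z ∈ u') (hwu : w ∈ u'),
          (G.induce u').Reachable ⟨z, hzu⟩ ⟨w, hwu⟩ := by
        intro u' z w hz' hw' hzu hwu
        by_cases hzw : z = w
        · subst hzw; exact Reachable.refl _
        · exact SimpleGraph.Adj.reachable (hcomp₁ z hz' w hw' hzw)
      have hconn : (G.induce U).Connected := by
        rw [connected_iff]
        refine ⟨preconnected_of_reach hqU ?_, ⟨⟨q, hqU⟩⟩⟩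
        intro z hz
        rcases hz with hz1 | hzseg
        · exact step₁ U z q hz1 hq _ hqU
        · refine reach_induce ((Walk.cons h R).dropUntil z hzseg) ?_ _ hqU
          intro w hw
          exact hUseg w (Walk.support_dropUntil_subset _ _ hw)
      have hprop : ∀ v ∈ U, (G.induce (U \ {v})).Preconnected := by
        intro v hvU
        -- target: q if v ≠ q, else xx
        obtain ⟨w₀, hw₀s, hw₀v⟩ : ∃ w₀, w₀ ∈ s₁ ∧ w₀ ≠ v := by
          by_cases hvq : v = q
          · exact ⟨xx, hx, fun hc => hxq (hc.trans hvq)⟩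
          · exact ⟨q, hq, fun hc => hvq (hc.symm)⟩
        have hw₀U : w₀ ∈ U \ {v} := hmem' w₀ v (hUs₁ hw₀s) hw₀v
        refine preconnected_of_reach hw₀U ?_
        intro z hz
        obtain ⟨hzU, hzv⟩ := hz
        have hzv' : z ≠ v := by simpa using hzv
        rcases hzU with hz1 | hzseg
        · exact step₁ _ z w₀ hz1 hw₀s _ hw₀U
        · obtain ⟨p, hp, Wq, hWq⟩ := reach_endpoints hseg hzseg hzv'
          have hWq' : ∀ w ∈ Wq.support, w ∈ U \ {v} := by
            intro w hw
            exact hmem' w v (hUseg w (hWq w hw).1) (hWq w hw).2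
          have hpU : p ∈ U \ {v} := hWq' p Wq.end_mem_support
          have hps : p ∈ s₁ := by rcases hp with rfl | rfl; exacts [hx, hq]
          exact (reach_induce Wq hWq' (hWq' z Wq.start_mem_support) hpU).trans
            (step₁ _ p w₀ hps hw₀s _ hw₀U)
      have hfin : U = s₁ := hs₁.2.2.2 U hUs₁ ⟨hconn, hprop⟩
      have : zz ∈ s₁ := by
        rw [← hfin]
        exact hUseg zz (by simp)
      exact hz this

private lemma swap_path {s : Set V} (hcomp : ∀ x ∈ s, ∀ y ∈ s, x ≠ y → G.Adj x y)
    {x y : V} (P : G.Walk x y) (hP : P.IsPath) (hsub : ∀ v ∈ P.support, v ∈ s)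
    (hlen : 3 ≤ P.length) :
    ∃ (P' : G.Walk x y) (z : V), P'.IsPath ∧ P'.length = P.length ∧
      (∀ v ∈ P'.support, v ∈ s) ∧ P'.support.tail.Perm P.support.tail ∧
      z ∈ s ∧ z ≠ x ∧ s(x, z) ∈ P.edges ∧ s(x, z) ∉ P'.edges := by
  cases P with
  | nil => simp at hlen
  | @cons _ v₁ _ h₁ P₂ =>
    cases P₂ with
    | nil => simp at hlen
    | @cons _ v₂ _ h₂ P₃ =>
      cases P₃ with
      | nil => simp at hlen
      | @cons _ v₃ _ h₃ R =>
        -- P = x ~ v₁ ~ v₂ ~ v₃ :: R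
        have hnd : (x :: v₁ :: v₂ :: R.support).Nodup := by
          simpa using hP.support_nodup
        have hx : x ∈ s := hsub x (by simp)
        have hv₁ : v₁ ∈ s := hsub v₁ (by simp)
        have hv₂ : v₂ ∈ s := hsub v₂ (by simp)
        have hv₃ : v₃ ∈ s := hsub v₃ (by simp [R.start_mem_support])
        have hxv₁ : x ≠ v₁ := h₁.ne
        have hxv₂ : x ≠ v₂ := by
          intro hc; subst hc; simp at hnd
        have hxR : x ∉ R.support := by
          intro hc; simp [hc] at hnd
        have hv₁v₂ : v₁ ≠ v₂ := h₂.ne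
        have hv₁R : v₁ ∉ R.support := by
          intro hc; simp [hc] at hnd
        have hv₂R : v₂ ∉ R.support := by
          intro hc; simp [hc] at hnd
        have hv₁v₃ : v₁ ≠ v₃ := fun hc => hv₁R (hc ▸ R.start_mem_support)
        have hv₂v₃ : v₂ ≠ v₃ := h₃.ne
        have hxv₃ : x ≠ v₃ := fun hc => hxR (hc ▸ R.start_mem_support)
        refine ⟨Walk.cons (hcomp x hx v₂ hv₂ hxv₂)
          (Walk.cons (hcomp v₂ hv₂ v₁ hv₁ hv₁v₂.symm)
            (Walk.cons (hcomp v₁ hv₁ v₃ hv₃ hv₁v₃) R)), v₁, ?_, by simp, ?_, ?_, hv₁,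
            hxv₁.symm, ?_, ?_⟩
        · rw [Walk.isPath_def]
          have hperm : (x :: v₂ :: v₁ :: R.support).Perm (x :: v₁ :: v₂ :: R.support) :=
            List.Perm.cons x (List.Perm.swap v₁ v₂ R.support)
          simpa using hperm.nodup_iff.mpr hnd
        · intro v hv
          simp only [Walk.support_cons, List.mem_cons] at hv
          rcases hv with rfl | rfl | rfl | hv
          exacts [hx, hv₂, hv₁, hsub v (by simp [hv])]
        · simpa using List.Perm.swap v₁ v₂ R.support
        · simp
        · intro hc
          simp only [Walk.edges_cons, List.mem_cons] at hc
          rcases hc with hc | hc | hc | hc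
          · rw [Sym2.eq_iff] at hc
            rcases hc with ⟨_, hc⟩ | ⟨hc, _⟩
            exacts [hv₁v₂ hc, hxv₂ hc]
          · rw [Sym2.eq_iff] at hc
            rcases hc with ⟨hc, _⟩ | ⟨_, hc⟩
            exacts [hxv₂ hc, hv₁v₂ hc]
          · rw [Sym2.eq_iff] at hc
            rcases hc with ⟨hc, _⟩ | ⟨hc, _⟩
            exacts [hxv₁ hc, hxv₃ hc]
          · exact hxR (R.fst_mem_support_of_mem_edges hc)

private lemma edge_split {a b : V} :
    ∀ {x : V} (P : G.Walk x a), P.IsPath → s(a, b) ∈ P.edges →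
      ∃ (P' : G.Walk x b) (hba : G.Adj b a), P = P'.append (Walk.cons hba Walk.nil) := by
  intro x P
  induction P with
  | nil => intro _ he; simp at he
  | @cons xx yy _ h₂ P₂ ih =>
    intro hP he
    rw [Walk.edges_cons] at he
    rcases List.mem_cons.mp he with heq | hmem
    · rw [Sym2.eq_iff] at heq
      rcases heq with ⟨hax, hby⟩ | ⟨hay, hbx⟩
      · exfalso
        subst hax
        rw [Walk.isPath_iff_eq_nil] at hP
        exact absurd hP (by simp)
      · subst hay; subst hbx
        have hP₂ : P₂ = Walk.nil := by
          rw [← Walk.isPath_iff_eq_nil]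
          exact hP.of_cons
        subst hP₂
        refine ⟨Walk.nil, h₂, ?_⟩
        simp
    · obtain ⟨P₂', hba, hP₂eq⟩ := ih hP.of_cons hmem
      exact ⟨Walk.cons h₂ P₂', hba, by rw [hP₂eq, Walk.cons_append]⟩

private lemma cycle_split {a b : V} (C : G.Walk a a) (hC : C.IsCycle)
    (he : s(a, b) ∈ C.edges) :
    ∃ (Q : G.Walk b a), Q.IsPath ∧ s(a, b) ∉ Q.edges ∧ Q.length + 1 = C.length ∧
      {e | e ∈ C.edges} = insert s(a, b) {e | e ∈ Q.edges} := by
  cases C with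
  | nil => simp at he
  | @cons _ d _ h tail =>
    obtain ⟨htail, hnotin⟩ := (Walk.cons_isCycle_iff tail h).mp hC
    rw [Walk.edges_cons] at he
    rcases List.mem_cons.mp he with heq | hmem
    · -- b = d
      have hbd : b = d := by
        rw [Sym2.eq_iff] at heq
        rcases heq with ⟨_, h1⟩ | ⟨h1, _⟩
        · exact h1
        · exact absurd h1 h.ne
      subst hbd
      refine ⟨tail, htail, hnotin, by simp, ?_⟩
      ext e
      simp only [Walk.edges_cons, List.mem_cons, Set.mem_insert_iff, Set.mem_setOf_eq]
    · -- s(a,b) ∈ tail.edges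
      have hbd : b ≠ d := by
        intro hc; subst hc
        exact hnotin hmem
      obtain ⟨tail', hba, htaileq⟩ := edge_split tail htail hmem
      have hsupp : tail.support = tail'.support ++ [a] := by
        rw [htaileq, Walk.support_append]
        simp
      have hand : a ∉ tail'.support := by
        have hnd := htail.support_nodup
        rw [hsupp] at hnd
        have := List.disjoint_of_nodup_append hnd
        intro hc
        exact this hc (by simp)
      have htail'path : tail'.IsPath := by
        apply Walk.IsPath.of_append_left (q := Walk.cons hba Walk.nil)
        rw [← htaileq]; exact htail
      have hQpath : (Walk.cons h tail').IsPath := htail'path.cons hand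
      have hedges : tail.edges = tail'.edges ++ [s(b, a)] := by
        rw [htaileq, Walk.edges_append]
        simp
      have hnotin' : s(b, a) ∉ tail'.edges := by
        have hnd := htail.edges_nodup
        rw [hedges] at hnd
        have := List.disjoint_of_nodup_append hnd
        intro hc
        exact this hc (by simp)
      refine ⟨(Walk.cons h tail').reverse, hQpath.reverse, ?_, ?_, ?_⟩
      · rw [Walk.edges_reverse, List.mem_reverse]
        intro hc
        rw [Walk.edges_cons] at hc
        rcases List.mem_cons.mp hc with heq' | hmem'
        · rw [Sym2.eq_iff] at heq'
          rcases heq' with ⟨_, h1⟩ | ⟨h1, _⟩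
          · exact hbd h1
          · exact h.ne h1
        · exact hnotin' (by rwa [Sym2.eq_swap] at hmem')
      · simp only [Walk.length_reverse, Walk.length_cons]
        rw [htaileq]
        simp [Walk.length_append]
      · ext e
        have hswap : s(b, a) = s(a, b) := Sym2.eq_swap
        simp only [Set.mem_insert_iff, Set.mem_setOf_eq, Walk.edges_reverse, List.mem_reverse,
          Walk.edges_cons, hedges, List.mem_cons, List.mem_append, List.mem_singleton, hswap]
        tauto

private lemma final_step {t : ℕ} {a b : V} {G' : SimpleGraph V} (hle : G ≤ G')
    (hab' : G'.Adj a b) {cset : Set (Sym2 V)}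
    (huniq : ∀ y, IsCtEdgeSet G' t y → y = cset)
    (P₁ : G.Walk a b) (hP₁path : P₁.IsPath) (hP₁ab : s(a, b) ∉ P₁.edges)
    (hP₁len : P₁.length + 1 = t) {e₀ : Sym2 V} (he₀old : e₀ ∈ cset)
    (he₀new : e₀ ∉ P₁.edges) (he₀ab : e₀ ≠ s(a, b)) : False := by
  have hsub : ∀ e ∈ P₁.edges, e ∈ G'.edgeSet :=
    fun e he => edgeSet_mono hle (P₁.edges_subset_edgeSet he)
  set X := (P₁.transfer G' hsub).reverse with hX
  have hXpath : X.IsPath := (hP₁path.transfer hsub).reverse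
  have hXed : ∀ e, e ∈ X.edges ↔ e ∈ P₁.edges := by
    intro e
    rw [hX, Walk.edges_reverse, List.mem_reverse, Walk.edges_transfer]
  have hWcyc : (Walk.cons hab' X).IsCycle :=
    (Walk.cons_isCycle_iff X hab').mpr ⟨hXpath, fun hc => hP₁ab ((hXed _).mp hc)⟩
  have hWlen : (Walk.cons hab' X).length = t := by
    rw [Walk.length_cons, hX, Walk.length_reverse, Walk.length_transfer, hP₁len]
  have heq := huniq {e | e ∈ (Walk.cons hab' X).edges} ⟨a, _, hWcyc, hWlen, rfl⟩
  rw [← heq] at he₀old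
  simp only [Set.mem_setOf_eq, Walk.edges_cons, List.mem_cons] at he₀old
  rcases he₀old with h | h
  · exact he₀ab h
  · exact he₀new ((hXed _).mp h)

end Helpers

/-- For `t ≥ 6`, in a uniquely `C_t`-saturated graph with at least `t` vertices, no two
distinct blocks sharing a common vertex are both complete. -/
theorem stmt_3 {V : Type*} [Fintype V] (G : SimpleGraph V) (t : ℕ) (ht : 6 ≤ t)
    (hn : t ≤ Fintype.card V) (hG : UniquelyCSat G t) (s₁ s₂ : Set V)
    (hs₁ : IsBlock G s₁) (hs₂ : IsBlock G s₂) (hne : s₁ ≠ s₂)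
    (hshare : (s₁ ∩ s₂).Nonempty) :
    ¬ ((∀ a ∈ s₁, ∀ b ∈ s₁, a ≠ b → G.Adj a b) ∧
       (∀ a ∈ s₂, ∀ b ∈ s₂, a ≠ b → G.Adj a b)) := by
  classical
  rintro ⟨hcomp₁, hcomp₂⟩
  obtain ⟨hnocyc, hsat⟩ := hG
  obtain ⟨c, hc₁, hc₂⟩ := hshare
  have hns₁ : ¬ s₁ ⊆ s₂ := fun hsub =>
    hne (hs₁.2.2.2 s₂ hsub ⟨hs₂.2.1, hs₂.2.2.1⟩).symm
  have hns₂ : ¬ s₂ ⊆ s₁ := fun hsub =>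
    hne (hs₂.2.2.2 s₁ hsub ⟨hs₁.2.1, hs₁.2.2.1⟩)
  obtain ⟨a, ha₁, ha₂⟩ := Set.not_subset.mp hns₁
  obtain ⟨b, hb₂, hb₁⟩ := Set.not_subset.mp hns₂
  have hac : a ≠ c := fun h => ha₂ (h ▸ hc₂)
  have hbc : b ≠ c := fun h => hb₁ (h ▸ hc₁)
  have hinter : ∀ z, z ∈ s₁ → z ∈ s₂ → z = c := by
    intro z hz1 hz2
    by_contra hzc
    refine master hs₁ hs₂ hne hcomp₁ hcomp₂ hz1 hz2 hc₁ hc₂ Walk.nil Walk.IsPath.nil ?_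
    simp only [Walk.support_nil, List.mem_singleton]
    exact fun h => hzc h.symm
  have hnadj : ¬ G.Adj a b := by
    intro hadj
    refine master hs₁ hs₂ hne hcomp₁ hcomp₂ ha₁ hb₂ hc₁ hc₂ (Walk.cons hadj Walk.nil)
      ?_ ?_
    · rw [Walk.cons_isPath_iff]
      refine ⟨Walk.IsPath.nil, ?_⟩
      simpa using hadj.ne
    · simp only [Walk.support_cons, Walk.support_nil, List.mem_cons, List.mem_singleton]
      rintro (h | h | h)
      exacts [hac h.symm, hbc h.symm, (by simp at h)]
  have hab : a ≠ b := fun h => hb₁ (h ▸ ha₁)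
  obtain ⟨cset, hex, huniq⟩ := hsat a b hab hnadj
  set G' : SimpleGraph V := G ⊔ fromEdgeSet {s(a, b)} with hG'def
  obtain ⟨v₀, W, hWcyc, hWlen, hWed⟩ := hex
  have hGle : G ≤ G' := le_sup_left
  have hedge' : ∀ e ∈ G'.edgeSet, e ∈ G.edgeSet ∨ e = s(a, b) := by
    intro e he
    rw [hG'def, edgeSet_sup] at he
    rcases he with he | he
    · exact Or.inl he
    · rw [edgeSet_fromEdgeSet] at he
      exact Or.inr he.1
  have hab' : G'.Adj a b := by
    rw [hG'def, sup_adj, fromEdgeSet_adj]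
    exact Or.inr ⟨rfl, hab⟩
  have habW : s(a, b) ∈ W.edges := by
    by_contra hnot
    refine hnocyc ⟨v₀, W.transfer G ?_, hWcyc.transfer _, by rwa [Walk.length_transfer]⟩
    intro e he
    rcases hedge' e (W.edges_subset_edgeSet he) with h | h
    · exact h
    · exact absurd (h ▸ he) hnot
  have haW : a ∈ W.support := W.fst_mem_support_of_mem_edges habW
  set C := W.rotate a haW with hCdef
  have hCcyc : C.IsCycle := hWcyc.rotate haW
  have hCperm : C.edges.Perm W.edges := (W.rotate_edges a haW).perm
  have habC : s(a, b) ∈ C.edges := hCperm.mem_iff.mpr habW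
  have hClen : C.length = t := by
    rw [← hWlen, ← Walk.length_edges, ← Walk.length_edges]
    exact hCperm.length_eq
  have hCset : {e | e ∈ C.edges} = cset := by
    rw [← hWed]; ext e; simp only [Set.mem_setOf_eq]; exact hCperm.mem_iff
  obtain ⟨Q, hQpath, hQab, hQlen, hQset⟩ := cycle_split C hCcyc habC
  have hQGed : ∀ e ∈ Q.edges, e ∈ G.edgeSet := by
    intro e he
    rcases hedge' e (Q.edges_subset_edgeSet he) with h | h
    · exact h
    · exact absurd (h ▸ he) hQab
  set P₀ : G.Walk b a := Q.transfer G hQGed with hP₀def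
  set P₁ : G.Walk a b := P₀.reverse with hP₁def
  have hP₁path : P₁.IsPath := (hQpath.transfer hQGed).reverse
  have hP₁ed : ∀ e, e ∈ P₁.edges ↔ e ∈ Q.edges := by
    intro e
    rw [hP₁def, Walk.edges_reverse, List.mem_reverse, hP₀def, Walk.edges_transfer]
  have hP₁len : P₁.length = Q.length := by
    rw [hP₁def, Walk.length_reverse, hP₀def, Walk.length_transfer]
  have hcset_mem : ∀ e, e ∈ P₁.edges → e ∈ cset := by
    intro e he
    rw [← hCset, hQset]
    exact Set.mem_insert_iff.mpr (Or.inr ((hP₁ed e).mp he))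
  have hcP₁ : c ∈ P₁.support := by
    by_contra hcc
    exact master hs₁ hs₂ hne hcomp₁ hcomp₂ ha₁ hb₂ hc₁ hc₂ P₁ hP₁path hcc
  set T₁ := P₁.takeUntil c hcP₁ with hT₁def
  set T₂ := P₁.dropUntil c hcP₁ with hT₂def
  have hspec : T₁.append T₂ = P₁ := P₁.take_spec hcP₁
  have hT₁path : T₁.IsPath := hP₁path.takeUntil hcP₁
  have hT₂path : T₂.IsPath := hP₁path.dropUntil hcP₁
  have hT₁sub : ∀ v ∈ T₁.support, v ∈ s₁ := path_subset_block hs₁ hcomp₁ T₁ hT₁path ha₁ hc₁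
  have hT₂sub : ∀ v ∈ T₂.support, v ∈ s₂ := path_subset_block hs₂ hcomp₂ T₂ hT₂path hc₂ hb₂
  have hlensum : T₁.length + T₂.length = P₁.length := by
    rw [← hspec, Walk.length_append]
  have hQlent : Q.length + 1 = t := by rw [hQlen, hClen]
  have hndP₁ : (T₁.support ++ T₂.support.tail).Nodup := by
    rw [← Walk.support_append, hspec]
    exact hP₁path.support_nodup
  have habP₁ : s(a, b) ∉ P₁.edges := fun hc => hQab ((hP₁ed _).mp hc)
  rcases (by omega : 3 ≤ T₁.length ∨ 3 ≤ T₂.length) with h3 | h3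
  · obtain ⟨T₁', z, hT₁'path, hT₁'len, hT₁'sub, hT₁'perm, hzs, hza, hzedge, hznot⟩ :=
      swap_path hcomp₁ T₁ hT₁path hT₁sub h3
    have hpermsup : T₁'.support.Perm T₁.support := by
      rw [T₁'.support_eq_cons, T₁.support_eq_cons]
      exact hT₁'perm.cons a
    have hP₂path : (T₁'.append T₂).IsPath := by
      rw [Walk.isPath_def, Walk.support_append]
      exact (List.Perm.nodup_iff (hpermsup.append_right _)).mpr hndP₁
    have habP₂ : s(a, b) ∉ (T₁'.append T₂).edges := by
      rw [Walk.edges_append, List.mem_append]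
      rintro (hc | hc)
      · exact hb₁ (hT₁'sub b (Walk.snd_mem_support_of_mem_edges _ hc))
      · exact ha₂ (hT₂sub a (Walk.fst_mem_support_of_mem_edges _ hc))
    have hP₂len : (T₁'.append T₂).length + 1 = t := by
      rw [Walk.length_append, hT₁'len]; omega
    have he₀old : s(a, z) ∈ cset := by
      apply hcset_mem
      rw [← hspec, Walk.edges_append, List.mem_append]
      exact Or.inl hzedge
    have he₀new : s(a, z) ∉ (T₁'.append T₂).edges := by
      rw [Walk.edges_append, List.mem_append]
      rintro (hc | hc)
      · exact hznot hc
      · exact ha₂ (hT₂sub a (Walk.fst_mem_support_of_mem_edges _ hc))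
    have he₀ab : s(a, z) ≠ s(a, b) := by
      intro hh
      rw [Sym2.eq_iff] at hh
      rcases hh with ⟨_, h1⟩ | ⟨h1, _⟩
      · exact hb₁ (h1 ▸ hzs)
      · exact hab h1
    exact final_step hGle hab' huniq _ hP₂path habP₂ hP₂len he₀old he₀new he₀ab
  · obtain ⟨T₂', z, hT₂'path, hT₂'len, hT₂'sub, hT₂'perm, hzs, hzc, hzedge, hznot⟩ :=
      swap_path hcomp₂ T₂ hT₂path hT₂sub h3
    have hzs₁ : z ∉ s₁ := fun hz1 => hzc (hinter z hz1 hzs)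
    have hP₂path : (T₁.append T₂').IsPath := by
      rw [Walk.isPath_def, Walk.support_append]
      exact (List.Perm.nodup_iff ((hT₂'perm).append_left _)).mpr hndP₁
    have habP₂ : s(a, b) ∉ (T₁.append T₂').edges := by
      rw [Walk.edges_append, List.mem_append]
      rintro (hc | hc)
      · exact hb₁ (hT₁sub b (Walk.snd_mem_support_of_mem_edges _ hc))
      · exact ha₂ (hT₂'sub a (Walk.fst_mem_support_of_mem_edges _ hc))
    have hP₂len : (T₁.append T₂').length + 1 = t := by
      rw [Walk.length_append, hT₂'len]; omega
    have he₀old : s(c, z) ∈ cset := by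
      apply hcset_mem
      rw [← hspec, Walk.edges_append, List.mem_append]
      exact Or.inr hzedge
    have he₀new : s(c, z) ∉ (T₁.append T₂').edges := by
      rw [Walk.edges_append, List.mem_append]
      rintro (hc | hc)
      · exact hzs₁ (hT₁sub z (Walk.snd_mem_support_of_mem_edges _ hc))
      · exact hznot hc
    have he₀ab : s(c, z) ≠ s(a, b) := by
      intro hh
      rw [Sym2.eq_iff] at hh
      rcases hh with ⟨h1, _⟩ | ⟨h1, _⟩
      · exact hac h1.symm
      · exact hbc h1.symm
    exact final_step hGle hab' huniq _ hP₂path habP₂ hP₂len he₀old he₀new he₀ab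
end

section
/- For t ≥ 3 and k < t, no uniquely C_t-saturated graph contains the graph H_{k,t-k-1} as a subgraph, where H_{m,ℓ} is a cycle of length 2m with a pendant path of length ℓ attached at one vertex. -/
open SimpleGraph

/-- `Hgraph m ℓ`: a cycle on `2*m` vertices (the vertices `0, …, 2*m - 1`) together with
a pendant path of length `ℓ` (through the vertices `2*m, …, 2*m + ℓ - 1`) attached at
the cycle vertex `0`. -/
def Hgraph (m ℓ : ℕ) : SimpleGraph (Fin (2 * m + ℓ)) :=
  SimpleGraph.fromRel (fun a b =>
    (a.val < 2 * m ∧ b.val < 2 * m ∧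
      (b.val = a.val + 1 ∨ (a.val = 0 ∧ b.val = 2 * m - 1))) ∨
    (a.val = 0 ∧ b.val = 2 * m) ∨
    (2 * m ≤ a.val ∧ b.val = a.val + 1))

/-- `G` contains `H` as a (not necessarily induced) subgraph. -/
def ContainsSub {W V : Type*} (H : SimpleGraph W) (G : SimpleGraph V) : Prop :=
  ∃ f : W → V, Function.Injective f ∧ ∀ a b : W, H.Adj a b → G.Adj (f a) (f b)

/-
Let `u` be the free end of the pendant path of `H_{k,t-k-1}` (its attachment vertex if the
path is empty) and `w` the vertex of the `2k`-cycle opposite the attachment vertex. The two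
halves of the cycle give two `u`–`w` paths of length `(t-k-1) + k = t - 1` with different
edge sets, since `k ≥ 2`. If `uw` is an edge of `G`, either path closes up to a `C_t` in `G`;
otherwise adding `uw` creates two different `C_t`'s.
-/

namespace SimpleGraph

variable {V W : Type*} {G : SimpleGraph V}

theorem Walk.IsPath.cons_isCycle_of_two_le_length {u v : V} {p : G.Walk u v} (hp : p.IsPath)
    (hl : 2 ≤ p.length) (h : G.Adj v u) : (Walk.cons h p).IsCycle :=
  (Walk.cons_isCycle_iff p h).2 ⟨hp, fun he => by
    have := hp.length_eq_one_of_mem_edges (Sym2.eq_swap ▸ he)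
    omega⟩

theorem Walk.exists_isPath_of_injOn (v : ℕ → V) (n : ℕ)
    (hadj : ∀ i < n, G.Adj (v i) (v (i + 1))) (hinj : Set.InjOn v (Set.Iic n)) :
    ∃ p : G.Walk (v 0) (v n), p.IsPath ∧ p.length = n ∧
      p.support = (List.range (n + 1)).map v ∧
      p.edges = (List.range n).map fun i => s(v i, v (i + 1)) := by
  suffices h : ∃ p : G.Walk (v 0) (v n), p.length = n ∧
      p.support = (List.range (n + 1)).map v ∧
      p.edges = (List.range n).map fun i => s(v i, v (i + 1)) by
    obtain ⟨p, hl, hs, he⟩ := h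
    refine ⟨p, .mk' ?_, hl, hs, he⟩
    rw [hs]
    exact List.nodup_range.map_on fun i hi j hj hij =>
      hinj (by simpa [Nat.lt_succ_iff] using hi) (by simpa [Nat.lt_succ_iff] using hj) hij
  clear hinj
  induction n with
  | zero => exact ⟨.nil, rfl, rfl, rfl⟩
  | succ n ih =>
    obtain ⟨p, hl, hs, he⟩ := ih fun i hi => hadj i (by omega)
    refine ⟨p.concat (hadj n n.lt_succ_self), ?_, ?_, ?_⟩
    · simp [hl]
    · simp [Walk.support_concat, hs, List.range_succ]
    · simp [Walk.edges_concat, he, List.range_succ]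

theorem not_uniquelyCSat_of_isPath {t : ℕ} {u v : V} {p q : G.Walk u v} (hp : p.IsPath)
    (hq : q.IsPath) (ht : 3 ≤ t) (hpl : p.length + 1 = t) (hql : q.length + 1 = t)
    {e : Sym2 V} (hep : e ∈ p.edges) (heq : e ∉ q.edges) : ¬ UniquelyCSat G t := by
  rintro ⟨hfree, huniq⟩
  by_cases hvu : G.Adj v u
  · exact hfree ⟨v, .cons hvu p, hp.cons_isCycle_of_two_le_length (by omega) hvu, by simpa⟩
  have huv : u ≠ v := by
    rintro rfl
    have := congrArg (fun r : G.Path u u => r.1.length) (Path.loop_eq ⟨p, hp⟩)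
    simp only [Path.nil, Walk.length_nil] at this
    omega
  set G' := G ⊔ fromEdgeSet {s(v, u)}
  have hle : G ≤ G' := le_sup_left
  have hvu' : G'.Adj v u := (sup_adj _ _ _ _).2 (.inr ((fromEdgeSet_adj _).2 ⟨rfl, huv.symm⟩))
  have hcycle {r : G.Walk u v} (hr : r.IsPath) (hrl : r.length + 1 = t) :
      IsCtEdgeSet G' t (insert s(v, u) {x | x ∈ r.edges}) :=
    ⟨v, .cons hvu' (r.mapLe hle),
      (hr.mapLe hle).cons_isCycle_of_two_le_length (by simp; omega) hvu', by simpa,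
      by ext; simp⟩
  obtain ⟨c, -, hc⟩ := huniq v u huv.symm hvu
  have hne : e ≠ s(v, u) := fun h => hvu <| by
    rw [← mem_edgeSet, ← h]
    exact p.edges_subset_edgeSet hep
  have := (hc _ (hcycle hp hpl)).trans (hc _ (hcycle hq hql)).symm
  exact heq ((Set.ext_iff.1 this e).1 (.inr hep) |>.resolve_left hne)

theorem not_uniquelyCSat_of_containsSub {H : SimpleGraph W} {t : ℕ} {a b : W}
    {p q : H.Walk a b} (hp : p.IsPath) (hq : q.IsPath) (ht : 3 ≤ t) (hpl : p.length + 1 = t)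
    (hql : q.length + 1 = t) {e : Sym2 W} (hep : e ∈ p.edges) (heq : e ∉ q.edges)
    (hHG : ContainsSub H G) : ¬ UniquelyCSat G t := by
  obtain ⟨f, hf, hadj⟩ := hHG
  let φ : H →g G := ⟨f, hadj _ _⟩
  refine not_uniquelyCSat_of_isPath (hp.map (f := φ) hf) (hq.map (f := φ) hf) ht
    (by simpa) (by simpa) (e := e.map φ) ?_ ?_
  · rw [Walk.edges_map]
    exact List.mem_map_of_mem hep
  · rwa [Walk.edges_map, List.mem_map_of_injective (Sym2.map.injective (f := φ) hf)]

end SimpleGraph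

namespace Hgraph

/- The vertices, in order, of the two paths from the free end of the pendant path to the
cycle vertex `k`: down the pendant path to `0`, then along the cycle through `1, 2, …`
resp. `2k-1, 2k-2, …`. Indices past `l + k` are clamped to keep the values below `2k + l`. -/
def risingArc {k : ℕ} (hk : 0 < k) (l i : ℕ) : Fin (2 * k + l) :=
  ⟨if i < l then 2 * k + l - 1 - i else min (i - l) k, by split_ifs <;> omega⟩

def fallingArc {k : ℕ} (hk : 0 < k) (l i : ℕ) : Fin (2 * k + l) :=
  ⟨if i < l then 2 * k + l - 1 - i else if i = l then 0 else max (2 * k - (i - l)) k,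
    by split_ifs <;> omega⟩

section

variable {k : ℕ} (hk : 0 < k) (l : ℕ)

theorem adj_risingArc {i : ℕ} (hi : i < l + k) :
    (Hgraph k l).Adj (risingArc hk l i) (risingArc hk l (i + 1)) := by
  simp only [Hgraph, SimpleGraph.fromRel_adj, risingArc, ne_eq, Fin.ext_iff]
  split_ifs <;> omega

theorem adj_fallingArc {i : ℕ} (hi : i < l + k) :
    (Hgraph k l).Adj (fallingArc hk l i) (fallingArc hk l (i + 1)) := by
  simp only [Hgraph, SimpleGraph.fromRel_adj, fallingArc, ne_eq, Fin.ext_iff]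
  split_ifs <;> omega

theorem injOn_risingArc : Set.InjOn (risingArc hk l) (Set.Iic (l + k)) := by
  intro i hi j hj h
  simp only [Set.mem_Iic, risingArc, Fin.ext_iff] at hi hj h
  split_ifs at h <;> omega

theorem injOn_fallingArc : Set.InjOn (fallingArc hk l) (Set.Iic (l + k)) := by
  intro i hi j hj h
  simp only [Set.mem_Iic, fallingArc, Fin.ext_iff] at hi hj h
  split_ifs at h <;> omega

theorem fallingArc_ne_one (hk2 : 2 ≤ k) (i : ℕ) : (fallingArc hk l i).val ≠ 1 := by
  simp only [fallingArc]
  split_ifs <;> omega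

end

theorem exists_isPath_pair {k : ℕ} (hk : 2 ≤ k) (l : ℕ) :
    ∃ (a b : Fin (2 * k + l)) (p q : (Hgraph k l).Walk a b), p.IsPath ∧ q.IsPath ∧
      p.length = l + k ∧ q.length = l + k ∧ ∃ e ∈ p.edges, e ∉ q.edges := by
  have hk0 : 0 < k := by omega
  obtain ⟨p, hp, hpl, -, hpe⟩ := SimpleGraph.Walk.exists_isPath_of_injOn (risingArc hk0 l)
    (l + k) (fun _ => adj_risingArc hk0 l) (injOn_risingArc hk0 l)
  obtain ⟨q, hq, hql, hqs, -⟩ := SimpleGraph.Walk.exists_isPath_of_injOn (fallingArc hk0 l)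
    (l + k) (fun _ => adj_fallingArc hk0 l) (injOn_fallingArc hk0 l)
  have hstart : fallingArc hk0 l 0 = risingArc hk0 l 0 := by
    simp only [fallingArc, risingArc, Fin.ext_iff]
    split_ifs <;> omega
  have hend : fallingArc hk0 l (l + k) = risingArc hk0 l (l + k) := by
    simp only [fallingArc, risingArc, Fin.ext_iff]
    split_ifs <;> omega
  refine ⟨_, _, p, q.copy hstart hend, hp, by simpa, hpl, by simpa,
    s(risingArc hk0 l l, risingArc hk0 l (l + 1)), ?_, fun h => ?_⟩
  · rw [hpe]
    exact List.mem_map.2 ⟨l, List.mem_range.2 (by omega), rfl⟩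
  · have := (q.copy hstart hend).snd_mem_support_of_mem_edges h
    simp only [SimpleGraph.Walk.support_copy, hqs, List.mem_map] at this
    obtain ⟨i, -, hi⟩ := this
    apply fallingArc_ne_one hk0 l hk i
    rw [hi]
    simp only [risingArc]
    split_ifs <;> omega

end Hgraph

theorem stmt_4_general {V : Type*} (G : SimpleGraph V) (t k : ℕ) (ht : 3 ≤ t)
    (hk2 : 2 ≤ k) (hk : k < t) (hG : UniquelyCSat G t) :
    ¬ ContainsSub (Hgraph k (t - k - 1)) G := by
  intro hHG
  obtain ⟨a, b, p, q, hp, hq, hpl, hql, e, hep, heq⟩ :=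
    Hgraph.exists_isPath_pair hk2 (t - k - 1)
  exact SimpleGraph.not_uniquelyCSat_of_containsSub hp hq ht (by omega) (by omega) hep heq hHG hG

/-- For `t ≥ 3` and `2 ≤ k < t`, no uniquely `C_t`-saturated graph contains
`H_{k, t-k-1}` (a `2k`-cycle with a pendant path of length `t-k-1`) as a subgraph. -/
theorem stmt_4 {V : Type*} [Fintype V] (G : SimpleGraph V) (t k : ℕ) (ht : 3 ≤ t)
    (hk2 : 2 ≤ k) (hk : k < t) (hG : UniquelyCSat G t) :
    ¬ ContainsSub (Hgraph k (t - k - 1)) G :=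
  stmt_4_general G t k ht hk2 hk hG
end

section
/- For t ≥ 5, a uniquely C_t-saturated graph contains no cycle of length 2t−2 and no cycle of length 2t−4. -/
open SimpleGraph

/-!
If `G` is uniquely `C_t`-saturated, any two `x`–`y` paths of length `t - 1` have the same edges:
otherwise adding the edge `xy` would create two distinct `t`-cycles (and if `xy` is already an
edge, either path closes a `t`-cycle in `G`). On a cycle of length `2t - 2`, the two halves
between antipodal vertices are such paths.

On a cycle `v 0, …, v (2d - 1)` with `d = t - 2`, the same principle, applied to suitable pairs of
paths that go through a hypothetical chord or outside neighbour, shows that the cycle is a whole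
component of `G` without chords. A `t`-cycle of `G + v 0 v d` therefore lives on the cycle plus
the new edge. The parity of the labels changes along every cycle edge, while the new edge changes
it by `d`, so a closed walk using the new edge once has length of the parity of `d + 1`, never
`t = d + 2`.
-/

namespace SimpleGraph

variable {V : Type*} {G : SimpleGraph V}

namespace Walk

variable {u v w x : V}

theorem IsPath.append_cons {p : G.Walk u v} {q : G.Walk w x} (hp : p.IsPath) (hq : q.IsPath)
    (h : G.Adj v w) (hpq : p.support.Disjoint q.support) : (p.append (cons h q)).IsPath := by
  rw [isPath_def, support_append, support_cons, List.tail_cons]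
  exact hp.support_nodup.append hq.support_nodup hpq

theorem forall_mem_support_of_adj_imp {P : V → Prop} (hP : ∀ a b, G.Adj a b → P a → P b) :
    ∀ {u v : V} (p : G.Walk u v), P u → ∀ x ∈ p.support, P x
  | _, _, nil, hu, _, hx => by rwa [List.mem_singleton.1 hx]
  | _, _, cons h p, hu, x, hx => by
    rcases List.mem_cons.1 hx with rfl | hx
    · exact hu
    · exact forall_mem_support_of_adj_imp hP p (hP _ _ h hu) x hx

theorem apply_eq_apply_add_sum_map_edges {M : Type*} [AddCommMonoid M] (f : V → M)
    (g : Sym2 V → M) :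
    ∀ {u v : V} (p : G.Walk u v), (∀ d ∈ p.darts, f d.snd = f d.fst + g d.edge) →
      f v = f u + (p.edges.map g).sum
  | _, _, nil, _ => by simp
  | _, _, cons h p, hp => by
    have hfirst : f _ = f _ + g s(_, _) := hp ⟨(_, _), h⟩ (by simp [darts_cons])
    rw [edges_cons, List.map_cons, List.sum_cons, ← add_assoc, ← hfirst]
    exact apply_eq_apply_add_sum_map_edges f g p fun d hd => hp d (by simp [darts_cons, hd])

end Walk

/-- A cycle of length `n` in `G`, its vertices labelled `n`-periodically by `ℕ` so that labels
can be added without wrapping around. -/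
structure CycleLabelling (G : SimpleGraph V) (n : ℕ) where
  v : ℕ → V
  adj_succ : ∀ i, G.Adj (v i) (v (i + 1))
  inj : ∀ ⦃i j⦄, i < n → j < n → v i = v j → i = j
  v_mod : ∀ i, v (i % n) = v i

namespace CycleLabelling

variable {n : ℕ} (c : CycleLabelling G n)

theorem v_eq_v_iff (hn : 0 < n) {i j : ℕ} : c.v i = c.v j ↔ i ≡ j [MOD n] := by
  refine ⟨fun h => c.inj (Nat.mod_lt i hn) (Nat.mod_lt j hn) (by rw [c.v_mod, c.v_mod, h]),
    fun h => ?_⟩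
  rw [← c.v_mod, h, c.v_mod]

theorem v_add_self (i : ℕ) : c.v (i + n) = c.v i := by
  rw [← c.v_mod, Nat.add_mod_right, c.v_mod]

theorem v_self : c.v n = c.v 0 := by
  simpa using c.v_add_self 0

theorem eq_of_v_eq {a i j : ℕ} (hai : a ≤ i) (hi : i < a + n) (haj : a ≤ j) (hj : j < a + n)
    (h : c.v i = c.v j) : i = j :=
  ((c.v_eq_v_iff (by omega)).1 h).eq_of_abs_lt (abs_sub_lt_iff.2 ⟨by omega, by omega⟩)

def shift (k : ℕ) : CycleLabelling G n where
  v i := c.v (k + i)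
  adj_succ i := c.adj_succ (k + i)
  inj i j hi hj h := by
    have := c.eq_of_v_eq (a := k) (by omega) (by omega) (by omega) (by omega) h
    omega
  v_mod i := by rw [← c.v_mod, Nat.add_mod_mod, c.v_mod]

def walkFrom (a : ℕ) : (k : ℕ) → G.Walk (c.v a) (c.v (a + k))
  | 0 => .nil
  | k + 1 => (walkFrom a k).concat (c.adj_succ (a + k))

theorem length_walkFrom (a k : ℕ) : (c.walkFrom a k).length = k := by
  induction k with
  | zero => rfl
  | succ k ih => rw [walkFrom, Walk.length_concat, ih]

theorem mem_support_walkFrom {a k : ℕ} {x : V} :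
    x ∈ (c.walkFrom a k).support ↔ ∃ i ≤ k, c.v (a + i) = x := by
  induction k with
  | zero => simp [walkFrom, eq_comm]
  | succ k ih =>
    rw [walkFrom, Walk.support_concat, List.mem_append, List.mem_singleton, ih]
    constructor
    · rintro (⟨i, hi, rfl⟩ | rfl)
      exacts [⟨i, by omega, rfl⟩, ⟨k + 1, le_rfl, rfl⟩]
    · rintro ⟨i, hi, rfl⟩
      rcases Nat.lt_or_ge i (k + 1) with hlt | hge
      exacts [Or.inl ⟨i, by omega, rfl⟩, Or.inr (by rw [show i = k + 1 by omega])]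

theorem mem_edges_walkFrom {a k i : ℕ} (hi : i < k) :
    s(c.v (a + i), c.v (a + i + 1)) ∈ (c.walkFrom a k).edges := by
  induction k with
  | zero => omega
  | succ k ih =>
    rw [walkFrom, Walk.edges_concat, List.concat_eq_append, List.mem_append, List.mem_singleton]
    rcases Nat.lt_or_ge i k with hlt | hge
    exacts [Or.inl (ih hlt), Or.inr (by rw [show i = k by omega]; rfl)]

theorem isPath_walkFrom {a k : ℕ} (hk : k < n) : (c.walkFrom a k).IsPath := by
  induction k with
  | zero => exact .nil
  | succ k ih =>
    rw [walkFrom]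
    refine (ih (by omega)).concat (fun hmem => ?_) _
    obtain ⟨i, hi, hv⟩ := c.mem_support_walkFrom.1 hmem
    have := c.eq_of_v_eq (a := a) (by omega) (by omega) (by omega) (by omega) hv
    omega

def arc (a b : ℕ) (h : a ≤ b) : G.Walk (c.v a) (c.v b) :=
  (c.walkFrom a (b - a)).copy rfl (by rw [Nat.add_sub_cancel' h])

variable {a b : ℕ} {h : a ≤ b}

@[simp]
theorem length_arc : (c.arc a b h).length = b - a := by
  simp [arc, length_walkFrom]

theorem mem_support_arc {x : V} :
    x ∈ (c.arc a b h).support ↔ ∃ i, a ≤ i ∧ i ≤ b ∧ c.v i = x := by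
  rw [arc, Walk.support_copy, mem_support_walkFrom]
  constructor
  · rintro ⟨i, hi, rfl⟩
    exact ⟨a + i, by omega, by omega, rfl⟩
  · rintro ⟨i, hai, hib, rfl⟩
    exact ⟨i - a, by omega, by rw [Nat.add_sub_cancel' hai]⟩

theorem mem_edges_arc {i : ℕ} (hai : a ≤ i) (hib : i < b) :
    s(c.v i, c.v (i + 1)) ∈ (c.arc a b h).edges := by
  rw [arc, Walk.edges_copy]
  simpa [Nat.add_sub_cancel' hai] using c.mem_edges_walkFrom (a := a) (i := i - a) (by omega)

theorem isPath_arc (hb : b < a + n) : (c.arc a b h).IsPath := by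
  rw [arc, Walk.isPath_copy]
  exact c.isPath_walkFrom (by omega)

theorem disjoint_support_arc {a' b' : ℕ} {h' : a' ≤ b'} (hb : b < a') (hb' : b' < a + n) :
    (c.arc a b h).support.Disjoint (c.arc a' b' h').support := by
  intro x hx hx'
  obtain ⟨i, hai, hib, rfl⟩ := c.mem_support_arc.1 hx
  obtain ⟨j, haj, hjb, hv⟩ := c.mem_support_arc.1 hx'
  have := c.eq_of_v_eq (a := a) (by omega) (by omega) (by omega) (by omega) hv
  omega

noncomputable def parity (x : V) : ZMod 2 := (Function.invFun c.v x : ℕ)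

theorem parity_v (hn : 0 < n) (he : 2 ∣ n) (i : ℕ) : c.parity (c.v i) = i := by
  rw [parity, ZMod.natCast_eq_natCast_iff]
  exact ((c.v_eq_v_iff hn).1 (Function.invFun_eq ⟨i, rfl⟩)).of_dvd he

end CycleLabelling

end SimpleGraph

theorem HasCycleOn.nonempty_cycleLabelling {V : Type*} {G : SimpleGraph V} {n : ℕ}
    (h : HasCycleOn G n) : Nonempty (CycleLabelling G n) := by
  obtain ⟨u, w, hw, rfl⟩ := h
  have h3 := hw.three_le_length
  have hend : w.getVert w.length = w.getVert 0 := by simp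
  refine ⟨⟨fun i => w.getVert (i % w.length), fun i => ?_, fun i j hi hj h => ?_,
    fun i => by simp only [Nat.mod_mod]⟩⟩
  · have hi := Nat.mod_lt i (by omega : 0 < w.length)
    have hadj := w.adj_getVert_succ hi
    rcases Nat.lt_or_ge (i % w.length + 1) w.length with hlt | hge
    · rwa [Nat.add_mod, Nat.mod_eq_of_lt (by omega : 1 < w.length), Nat.mod_eq_of_lt hlt]
    · have hlast : i % w.length + 1 = w.length := by omega
      rw [hlast, hend] at hadj
      rwa [Nat.add_mod, Nat.mod_eq_of_lt (by omega : 1 < w.length), hlast, Nat.mod_self]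
  · simp only [Nat.mod_eq_of_lt hi, Nat.mod_eq_of_lt hj] at h
    exact hw.getVert_injOn' (by simp only [Set.mem_ofPred_eq]; omega)
      (by simp only [Set.mem_ofPred_eq]; omega) h

theorem List.sum_map_ite_eq_of_nodup {α M : Type*} [DecidableEq α] [AddCommMonoid M]
    {l : List α} (hl : l.Nodup) {a : α} (ha : a ∈ l) (x y : M) :
    (l.map fun e => if e = a then x else y).sum = x + (l.length - 1) • y := by
  rw [((List.perm_cons_erase ha).map _).sum_eq, List.map_cons, if_pos rfl, List.sum_cons,
    ← List.length_erase_of_mem ha, List.map_congr_left (g := fun _ => y), List.map_const',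
    List.sum_replicate]
  intro e he
  rw [if_neg ((hl.mem_erase_iff).1 he).1]

theorem isCtEdgeSet_insert_of_isPath {V : Type*} {G : SimpleGraph V} {t : ℕ} {x y : V}
    (hne : x ≠ y) (hxy : ¬ G.Adj x y) {p : G.Walk x y} (hp : p.IsPath) (hl : p.length + 1 = t) :
    IsCtEdgeSet (G ⊔ fromEdgeSet {s(x, y)}) t (insert s(x, y) {e | e ∈ p.edges}) := by
  have hyx : (G ⊔ fromEdgeSet {s(x, y)}).Adj y x := by simp [Sym2.eq_swap, hne.symm]
  refine ⟨y, .cons hyx (p.mapLe le_sup_left), ?_, by simpa using hl, ?_⟩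
  · refine (Walk.cons_isCycle_iff _ hyx).2 ⟨(Walk.isPath_mapLe _).2 hp, fun he => hxy ?_⟩
    rw [Walk.edges_mapLe_eq_edges] at he
    exact (p.adj_of_mem_edges he).symm
  · ext e
    simp [Sym2.eq_swap]

namespace UniquelyCSat

variable {V : Type*} {G : SimpleGraph V} {t d : ℕ} {x y : V}

theorem not_adj_of_isPath (hG : UniquelyCSat G t) (ht : 3 ≤ t) {p : G.Walk x y}
    (hp : p.IsPath) (hl : p.length + 1 = t) : ¬ G.Adj x y := by
  intro hxy
  refine hG.1 ⟨y, .cons hxy.symm p, (Walk.cons_isCycle_iff p hxy.symm).2 ⟨hp, fun he => ?_⟩,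
    by simpa using hl⟩
  have := hp.length_eq_one_of_mem_edges (Sym2.eq_swap ▸ he)
  omega

theorem mem_edges_of_isPath (hG : UniquelyCSat G t) (ht : 3 ≤ t) {p q : G.Walk x y}
    (hp : p.IsPath) (hq : q.IsPath) (hpl : p.length + 1 = t) (hql : q.length + 1 = t)
    {e : Sym2 V} (he : e ∈ p.edges) : e ∈ q.edges := by
  have hne : x ≠ y := by
    rintro rfl
    rw [(Walk.isPath_iff_nil.1 hp).eq_nil] at hpl
    simp at hpl
    omega
  by_cases hxy : G.Adj x y
  · exact (hG.not_adj_of_isPath ht hp hpl hxy).elim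
  obtain ⟨_, _, huniq⟩ := hG.2 x y hne hxy
  have hsets := (huniq _ (isCtEdgeSet_insert_of_isPath hne hxy hp hpl)).trans
    (huniq _ (isCtEdgeSet_insert_of_isPath hne hxy hq hql)).symm
  have he' : e ∈ insert s(x, y) {e | e ∈ q.edges} := hsets ▸ Set.mem_insert_of_mem _ he
  rcases he' with rfl | he'
  · exact (hxy (p.adj_of_mem_edges he)).elim
  · exact he'

theorem not_hasCycleOn_two_mul_sub_two (hG : UniquelyCSat G t) (ht : 3 ≤ t) :
    ¬ HasCycleOn G (2 * t - 2) := by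
  obtain ⟨m, rfl⟩ : ∃ m, t = m + 1 := ⟨t - 1, by omega⟩
  intro hC
  obtain ⟨c⟩ := (show 2 * (m + 1) - 2 = 2 * m by omega) ▸ hC |>.nonempty_cycleLabelling
  let p := (c.arc 0 m (by omega)).reverse
  let q := (c.arc m (2 * m) (by omega)).copy rfl c.v_self
  have he : s(c.v 0, c.v 1) ∈ p.edges := by
    rw [Walk.edges_reverse, List.mem_reverse]
    exact c.mem_edges_arc (i := 0) le_rfl (by omega)
  have hv1 : c.v 1 ∉ q.support := by
    rw [Walk.support_copy, c.mem_support_arc]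
    rintro ⟨i, hmi, him, hv⟩
    have := c.eq_of_v_eq (a := 1) (by omega) (by omega) (by omega) (by omega) hv
    omega
  exact hv1 (q.snd_mem_support_of_mem_edges (hG.mem_edges_of_isPath (by omega)
    (c.isPath_arc (by omega)).reverse ((Walk.isPath_copy _ _ _).2 (c.isPath_arc (by omega)))
    (by simp) (by simp; omega) he))

theorem not_adj_of_odd_span (hG : UniquelyCSat G (d + 2)) (c : CycleLabelling G (2 * d))
    {a : ℕ} (ha : 1 ≤ a) (had : 2 * a + 1 ≤ d) : ¬ G.Adj (c.v 0) (c.v (2 * a + 1)) := by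
  intro hchord
  let p := c.arc a (a + d + 1) (by omega)
  let q := (c.arc 0 a (by omega)).reverse.append
    (.cons hchord (c.arc (2 * a + 1) (a + d + 1) (by omega)))
  have hq : q.IsPath := (c.isPath_arc (by omega)).reverse.append_cons (c.isPath_arc (by omega))
    hchord (by
      rw [Walk.support_reverse, List.disjoint_reverse_left]
      exact c.disjoint_support_arc (by omega) (by omega))
  have hv0 : c.v 0 ∉ p.support := by
    rw [c.mem_support_arc]
    rintro ⟨i, hai, hid, hv⟩
    have := c.eq_of_v_eq (a := 0) (by omega) (by omega) (by omega) (by omega) hv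
    omega
  have he : s(c.v 0, c.v (2 * a + 1)) ∈ q.edges := by simp [q]
  exact hv0 (p.fst_mem_support_of_mem_edges (hG.mem_edges_of_isPath (by omega) hq
    (c.isPath_arc (by omega)) (by simp [q]; omega) (by simp; omega) he))

theorem not_adj_of_even_span (hG : UniquelyCSat G (d + 2)) (c : CycleLabelling G (2 * d))
    (hd : 3 ≤ d) {a : ℕ} (ha : 1 ≤ a) (had : 2 * a ≤ d) :
    ¬ G.Adj (c.v 0) (c.v (2 * a)) := by
  intro hchord
  have hchord' : G.Adj (c.v (2 * a)) (c.v (2 * d)) := by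
    rw [c.v_self]
    exact hchord.symm
  let p := (c.arc 0 a (by omega)).reverse.append
    (.cons hchord (c.arc (2 * a) (a + d) (by omega)))
  let q := (c.arc a (2 * a) (by omega)).append
    (.cons hchord' (c.arc (a + d) (2 * d) (by omega)).reverse)
  have hp : p.IsPath := (c.isPath_arc (by omega)).reverse.append_cons (c.isPath_arc (by omega))
    hchord (by
      rw [Walk.support_reverse, List.disjoint_reverse_left]
      exact c.disjoint_support_arc (by omega) (by omega))
  have hq : q.IsPath := (c.isPath_arc (by omega)).append_cons (c.isPath_arc (by omega)).reverse
    hchord' (by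
      rw [Walk.support_reverse, List.disjoint_reverse_right]
      exact c.disjoint_support_arc (by omega) (by omega))
  have he : s(c.v (2 * d - 1), c.v (2 * d - 1 + 1)) ∈ q.edges := by
    simp only [q, Walk.edges_append, Walk.edges_cons, Walk.edges_reverse, List.mem_append,
      List.mem_cons, List.mem_reverse]
    exact Or.inr (Or.inr (c.mem_edges_arc (by omega) (by omega)))
  have hv : c.v (2 * d - 1) ∉ p.support := by
    simp only [p, Walk.support_append, Walk.support_reverse, Walk.support_cons, List.tail_cons,
      List.mem_append, List.mem_reverse, c.mem_support_arc]
    rintro (⟨i, -, hi, hv⟩ | ⟨i, -, hi, hv⟩) <;>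
    · have := c.eq_of_v_eq (a := 0) (by omega) (by omega) (by omega) (by omega) hv
      omega
  exact hv (p.fst_mem_support_of_mem_edges (hG.mem_edges_of_isPath (by omega) hq hp
    (by simp [q]; omega) (by simp [p]; omega) he))

theorem not_adj_of_span (hG : UniquelyCSat G (d + 2)) (c : CycleLabelling G (2 * d))
    (hd : 3 ≤ d) (i : ℕ) {s : ℕ} (hs : 2 ≤ s) (hsd : s ≤ d) :
    ¬ G.Adj (c.v i) (c.v (i + s)) := by
  obtain ⟨a, rfl | rfl⟩ := Nat.even_or_odd' s
  · exact hG.not_adj_of_even_span (c.shift i) hd (by omega) hsd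
  · exact hG.not_adj_of_odd_span (c.shift i) (by omega) hsd

theorem mem_range_of_adj (hG : UniquelyCSat G (d + 2)) (c : CycleLabelling G (2 * d))
    (hd : 2 ≤ d) {x : V} {i : ℕ} (hx : G.Adj x (c.v i)) : x ∈ Set.range c.v := by
  by_contra hxC
  have hx' : G.Adj x (c.v (i + 2 * d)) := by
    rw [c.v_add_self]
    exact hx
  let p := Walk.cons hx (c.arc i (i + d) (by omega))
  let q := Walk.cons hx' (c.arc (i + d) (i + 2 * d) (by omega)).reverse
  have hxarc : ∀ {a b : ℕ} {h : a ≤ b}, x ∉ (c.arc a b h).support := fun hmem =>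
    hxC (c.mem_support_arc.1 hmem |>.imp fun _ h => h.2.2)
  have hp : p.IsPath := (Walk.cons_isPath_iff _ _).2 ⟨c.isPath_arc (by omega), hxarc⟩
  have hq : q.IsPath := (Walk.cons_isPath_iff _ _).2 ⟨(c.isPath_arc (by omega)).reverse,
    by rw [Walk.support_reverse, List.mem_reverse]; exact hxarc⟩
  have he : s(c.v i, c.v (i + 1)) ∈ p.edges :=
    List.mem_cons_of_mem _ (c.mem_edges_arc le_rfl (by omega))
  have hv : c.v (i + 1) ∉ q.support := by
    simp only [q, Walk.support_cons, Walk.support_reverse, List.mem_cons, List.mem_reverse,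
      c.mem_support_arc, not_or]
    refine ⟨fun h => hxC ⟨i + 1, h⟩, ?_⟩
    rintro ⟨j, hij, hji, hv⟩
    have := c.eq_of_v_eq (a := i + 1) (by omega) (by omega) (by omega) (by omega) hv
    omega
  exact hv (q.snd_mem_support_of_mem_edges (hG.mem_edges_of_isPath (by omega) hp hq
    (by simp [p]) (by simp [q]; omega) he))

theorem v_eq_v_succ_of_adj (hG : UniquelyCSat G (d + 2)) (c : CycleLabelling G (2 * d))
    (hd : 3 ≤ d) {i j : ℕ} (h : G.Adj (c.v i) (c.v j)) :
    c.v j = c.v (i + 1) ∨ c.v i = c.v (j + 1) := by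
  have hn : 0 < 2 * d := by omega
  suffices key : ∀ i j, i < j → j < 2 * d → G.Adj (c.v i) (c.v j) →
      c.v j = c.v (i + 1) ∨ c.v i = c.v (j + 1) by
    have hsucc : ∀ k, c.v (k + 1) = c.v (k % (2 * d) + 1) := fun k =>
      (c.v_eq_v_iff hn).2 ((Nat.mod_modEq k _).add_right 1).symm
    rw [← c.v_mod i, ← c.v_mod j] at h ⊢
    rw [hsucc i, hsucc j]
    rcases lt_trichotomy (i % (2 * d)) (j % (2 * d)) with hlt | heq | hgt
    · exact key _ _ hlt (Nat.mod_lt j hn) h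
    · exact (h.ne (congrArg c.v heq)).elim
    · exact (key _ _ hgt (Nat.mod_lt i hn) h.symm).symm
  intro i j hij hj h
  by_cases hspan : j - i ≤ d
  · by_cases hsucc : j = i + 1
    · exact Or.inl (congrArg c.v hsucc)
    have := hG.not_adj_of_span c hd i (s := j - i) (by omega) hspan
    rw [Nat.add_sub_cancel' hij.le] at this
    exact (this h).elim
  · by_cases hwrap : i = 0 ∧ j = 2 * d - 1
    · rw [hwrap.1, hwrap.2, Nat.sub_add_cancel (by omega), c.v_self]
      exact Or.inr rfl
    have := hG.not_adj_of_span c hd j (s := i + 2 * d - j) (by omega) (by omega)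
    rw [show j + (i + 2 * d - j) = i + 2 * d by omega, c.v_add_self] at this
    exact (this h.symm).elim

theorem parity_eq_add_one_of_adj (hG : UniquelyCSat G (d + 2)) (c : CycleLabelling G (2 * d))
    (hd : 3 ≤ d) {i : ℕ} {y : V} (h : G.Adj (c.v i) y) :
    c.parity y = c.parity (c.v i) + 1 := by
  have hpar := c.parity_v (by omega) (dvd_mul_right 2 d)
  obtain ⟨j, rfl⟩ := hG.mem_range_of_adj c (by omega) h.symm
  rcases hG.v_eq_v_succ_of_adj c hd h with h' | h'
  · rw [h', hpar, hpar, Nat.cast_succ]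
  · rw [h', hpar, hpar, Nat.cast_succ, add_assoc, CharTwo.add_self_eq_zero, add_zero]

theorem sum_map_edges_eq_zero [DecidableEq V] (hG : UniquelyCSat G (d + 2))
    (c : CycleLabelling G (2 * d)) (hd : 3 ≤ d) {u : V} (hu : u ∈ Set.range c.v)
    (p : (G ⊔ fromEdgeSet {s(c.v 0, c.v d)}).Walk u u) :
    (p.edges.map fun e => if e = s(c.v 0, c.v d) then (d : ZMod 2) else 1).sum = 0 := by
  have hpar := c.parity_v (by omega) (dvd_mul_right 2 d)
  have hrange : ∀ x ∈ p.support, x ∈ Set.range c.v := by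
    refine p.forall_mem_support_of_adj_imp (fun a b hab ⟨i, hi⟩ => ?_) hu
    rcases hab with hab | ⟨hab, -⟩
    · exact hG.mem_range_of_adj c (by omega) (hi ▸ hab.symm)
    · rcases Sym2.eq_iff.1 (Set.mem_singleton_iff.1 hab) with ⟨-, rfl⟩ | ⟨-, rfl⟩
      exacts [⟨d, rfl⟩, ⟨0, rfl⟩]
  -- Each edge changes `c.parity` by its weight, so the weights of a closed walk sum to zero.
  refine left_eq_add.1 (p.apply_eq_apply_add_sum_map_edges c.parity _ fun dt hdt => ?_)
  obtain ⟨i, hi⟩ := hrange _ (p.dart_fst_mem_support_of_mem_darts hdt)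
  have hedge : dt.edge = s(dt.fst, dt.snd) := rfl
  by_cases hchord : s(dt.fst, dt.snd) = s(c.v 0, c.v d)
  · rw [hedge, if_pos hchord]
    rcases Sym2.eq_iff.1 hchord with ⟨h0, hd'⟩ | ⟨hd', h0⟩
    · rw [h0, hd', hpar, hpar, Nat.cast_zero, zero_add]
    · rw [h0, hd', hpar, hpar, Nat.cast_zero, CharTwo.add_self_eq_zero]
  · rw [hedge, if_neg hchord]
    rcases dt.adj with hadj | ⟨hadj, -⟩
    · rw [← hi] at hadj ⊢
      exact hG.parity_eq_add_one_of_adj c hd hadj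
    · exact (hchord hadj).elim

theorem not_hasCycleOn_sup_fromEdgeSet (hG : UniquelyCSat G (d + 2)) (c : CycleLabelling G (2 * d))
    (hd : 3 ≤ d) : ¬ HasCycleOn (G ⊔ fromEdgeSet {s(c.v 0, c.v d)}) (d + 2) := by
  classical
  rintro ⟨u, W, hW, hl⟩
  by_cases he : s(c.v 0, c.v d) ∈ W.edges
  · have hv0 := W.fst_mem_support_of_mem_edges he
    have hsum := hG.sum_map_edges_eq_zero c hd ⟨0, rfl⟩ (W.rotate _ hv0)
    rw [((W.rotate_edges _ hv0).perm.map _).sum_eq,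
      List.sum_map_ite_eq_of_nodup hW.edges_nodup he, W.length_edges, hl,
      show d + 2 - 1 = d + 1 by omega, nsmul_one, Nat.cast_succ, ← add_assoc,
      CharTwo.add_self_eq_zero, zero_add] at hsum
    exact one_ne_zero hsum
  · refine hG.1 ⟨u, W.transfer G fun e heW => ?_, hW.transfer _, by simpa using hl⟩
    have := W.edges_subset_edgeSet heW
    rw [edgeSet_sup, edgeSet_fromEdgeSet] at this
    rcases this with h | ⟨h, -⟩
    exacts [h, (he (Set.mem_singleton_iff.1 h ▸ heW)).elim]

theorem not_hasCycleOn_two_mul_sub_four (hG : UniquelyCSat G t) (ht : 5 ≤ t) :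
    ¬ HasCycleOn G (2 * t - 4) := by
  obtain ⟨d, rfl⟩ : ∃ d, t = d + 2 := ⟨t - 2, by omega⟩
  intro hC
  obtain ⟨c⟩ := (show 2 * (d + 2) - 4 = 2 * d by omega) ▸ hC |>.nonempty_cycleLabelling
  have hne : c.v 0 ≠ c.v d := fun h => by
    have := c.eq_of_v_eq (a := 0) (by omega) (by omega) (by omega) (by omega) h
    omega
  have hnadj : ¬ G.Adj (c.v 0) (c.v d) := by
    simpa using hG.not_adj_of_span c (by omega) 0 (s := d) (by omega) le_rfl
  obtain ⟨_, ⟨u, W, hW, hl, -⟩, -⟩ := hG.2 _ _ hne hnadj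
  exact hG.not_hasCycleOn_sup_fromEdgeSet c (by omega) ⟨u, W, hW, hl⟩

end UniquelyCSat

theorem stmt_6_general {V : Type*} (G : SimpleGraph V) (t : ℕ) (ht : 5 ≤ t)
    (hG : UniquelyCSat G t) :
    ¬ HasCycleOn G (2 * t - 2) ∧ ¬ HasCycleOn G (2 * t - 4) :=
  ⟨hG.not_hasCycleOn_two_mul_sub_two (by omega), hG.not_hasCycleOn_two_mul_sub_four ht⟩

/-- For `t ≥ 5`, a uniquely `C_t`-saturated graph contains no cycle of length `2t - 2`
and no cycle of length `2t - 4`. -/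
theorem stmt_6 {V : Type*} [Fintype V] (G : SimpleGraph V) (t : ℕ) (ht : 5 ≤ t)
    (hG : UniquelyCSat G t) :
    ¬ HasCycleOn G (2 * t - 2) ∧ ¬ HasCycleOn G (2 * t - 4) :=
  stmt_6_general G t ht hG
end

section
/- Every friendship graph (k triangles sharing exactly one common vertex, k ≥ 2) is uniquely C_5-saturated: it contains no 5-cycle, and adding any edge of the complement creates exactly one 5-cycle. -/
open SimpleGraph

/-- `G` is a friendship graph: there is a center `z` adjacent to every other vertex,
and every other vertex is adjacent to exactly one vertex besides `z` (so `G` consists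
of edge-disjoint triangles all sharing the vertex `z`). -/
def IsFriendship {V : Type*} (G : SimpleGraph V) : Prop :=
  ∃ z : V, (∀ v : V, v ≠ z → G.Adj z v) ∧
    ∀ v : V, v ≠ z → ∃! w : V, w ≠ z ∧ G.Adj v w

section Aux
variable {V : Type*} {G : SimpleGraph V} {z : V} {p : V → V}

theorem path_loop_nil {V : Type*} {H : SimpleGraph V} {v : V} (t : H.Walk v v)
    (h : t.IsPath) : t = Walk.nil := by
  cases t with
  | nil => rfl
  | cons h' t' =>
    rw [Walk.cons_isPath_iff] at h
    exact absurd t'.end_mem_support h.2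

theorem lastEdge {V : Type*} {H : SimpleGraph V} {y : V} :
    ∀ {u v : V} (t : H.Walk u v), t.IsPath → s(v, y) ∈ t.edges →
      ∃ (t₂ : H.Walk u y) (h : H.Adj y v), t = t₂.concat h := by
  intro u v t
  induction t with
  | nil => simp
  | cons h' t' ih =>
    intro hp he
    rw [Walk.edges_cons, List.mem_cons] at he
    rcases he with he | he
    · rw [Sym2.eq_iff] at he
      rcases he with ⟨hvu, hyc⟩ | ⟨hvc, hyu⟩
      · exfalso
        rw [Walk.cons_isPath_iff] at hp
        exact hp.2 (hvu ▸ t'.end_mem_support)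
      · cases hvc
        cases hyu
        refine ⟨Walk.nil, h', ?_⟩
        rw [path_loop_nil t' hp.of_cons]
        simp [Walk.concat_nil]
    · obtain ⟨t₂, hadj, rfl⟩ := ih hp.of_cons he
      exact ⟨Walk.cons h' t₂, hadj, (Walk.concat_cons h' t₂ hadj).symm⟩


structure FrData (G : SimpleGraph V) (z : V) (p : V → V) : Prop where
  hz : ∀ v, v ≠ z → G.Adj z v
  hp1 : ∀ v, v ≠ z → p v ≠ z
  hp2 : ∀ v, v ≠ z → G.Adj v (p v)
  hp3 : ∀ v, v ≠ z → ∀ u, u ≠ z → G.Adj v u → u = p v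

namespace FrData

theorem psym (fd : FrData G z p) {v : V} (hv : v ≠ z) : p (p v) = v :=
  (fd.hp3 (p v) (fd.hp1 v hv) v hv (fd.hp2 v hv).symm).symm

theorem nbr (fd : FrData G z p) {v u : V} (hv : v ≠ z) (h : G.Adj v u) :
    u = z ∨ u = p v := by
  by_cases hu : u = z
  · exact Or.inl hu
  · exact Or.inr (fd.hp3 v hv u hu h)

theorem path4 (fd : FrData G z p) {a b : V} (t : G.Walk a b) (hpath : t.IsPath)
    (hl : t.length = 4) :
    a ≠ z ∧ b ≠ z ∧ t.support = [a, p a, z, p b, b] ∧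
      t.edges = [s(a, p a), s(p a, z), s(z, p b), s(p b, b)] := by
  cases t with
  | nil => simp at hl
  | cons h1 t1 =>
  cases t1 with
  | nil => simp at hl
  | cons h2 t2 =>
  cases t2 with
  | nil => simp at hl
  | cons h3 t3 =>
  cases t3 with
  | nil => simp at hl
  | cons h4 t4 =>
  cases t4 with
  | cons h5 t5 => simp at hl
  | nil =>
  clear hl
  rename_i v1 v2 v3
  rw [Walk.isPath_def] at hpath
  simp only [Walk.support_cons, Walk.support_nil, List.nodup_cons, List.mem_cons,
    List.mem_singleton, List.not_mem_nil, or_false, List.nodup_nil, and_true] at hpath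
  push_neg at hpath
  obtain ⟨⟨hav1, hav2, hav3, hab⟩, ⟨h12, h13, h1b⟩, ⟨h23, h2b⟩, h3b⟩ := hpath
  have haz : a ≠ z := by
    intro heq; subst a
    have hv1 : v1 ≠ z := h1.ne'
    have hv2z : v2 ≠ z := fun h => hav2 h.symm
    have hv2 : v2 = p v1 := (fd.nbr hv1 h2).resolve_left hv2z
    have hv3z : v3 ≠ z := fun h => hav3 h.symm
    have hv3 : v3 = p v2 := (fd.nbr hv2z h3).resolve_left hv3z
    rw [hv2, fd.psym hv1] at hv3
    exact h13 hv3.symm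
  have hbz : b ≠ z := by
    intro heq; subst b
    have hv3 : v3 ≠ z := h4.ne
    have hv2 : v2 = p v3 := (fd.nbr hv3 h3.symm).resolve_left h2b
    have hv1 : v1 = p v2 := (fd.nbr h2b h2.symm).resolve_left h1b
    rw [hv2, fd.psym hv3] at hv1
    exact h13 hv1
  have hv1 : v1 = p a := by
    rcases fd.nbr haz h1 with h | h
    · exfalso; subst v1
      have hv2z : v2 ≠ z := fun hh => h12 hh.symm
      have hv3z : v3 ≠ z := fun hh => h13 hh.symm
      have hv3 : v3 = p v2 := (fd.nbr hv2z h3).resolve_left hv3z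
      have hb : b = p v3 := (fd.nbr hv3z h4).resolve_left hbz
      rw [hv3, fd.psym hv2z] at hb
      exact h2b hb.symm
    · exact h
  subst hv1
  have hv2 : v2 = z := by
    rcases fd.nbr (fd.hp1 a haz) h2 with h | h
    · exact h
    · rw [fd.psym haz] at h
      exact absurd h.symm hav2
  subst v2
  have hv3z : v3 ≠ z := fun h => h23 h.symm
  have hv3 : v3 = p b := by
    have hb : b = p v3 := (fd.nbr hv3z h4).resolve_left hbz
    rw [hb, fd.psym hv3z]
  subst hv3
  exact ⟨haz, hbz, by simp, by simp⟩

theorem noC5 (fd : FrData G z p) : ¬ HasCycleOn G 5 := by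
  rintro ⟨v, w, hc, hl⟩
  cases w with
  | nil => simp at hl
  | cons h t =>
    rw [Walk.cons_isCycle_iff] at hc
    obtain ⟨haz, hbz, hsup, -⟩ := fd.path4 t hc.1 (by simpa using hl)
    rcases fd.nbr hbz h with h' | h'
    · exact haz h'
    · have hnd := hc.1.support_nodup
      rw [hsup, h'] at hnd
      simp at hnd

theorem cycEdges (fd : FrData G z p) {x y : V}
    (hxy : x ≠ y) (hnadj : ¬ G.Adj x y)
    (w : (G ⊔ fromEdgeSet {s(x, y)}).Walk x x) (hc : w.IsCycle) (hl : w.length = 5)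
    (he : s(x, y) ∈ w.edges) :
    {e | e ∈ w.edges} = {s(x, y), s(y, p y), s(p y, z), s(z, p x), s(p x, x)} := by
  have hG'adj : ∀ {u v : V}, (G ⊔ fromEdgeSet {s(x, y)}).Adj u v →
      G.Adj u v ∨ s(u, v) = s(x, y) := by
    intro u v h
    rw [sup_adj, fromEdgeSet_adj, Set.mem_singleton_iff] at h
    rcases h with h | ⟨h, -⟩
    · exact Or.inl h
    · exact Or.inr h
  cases w with
  | nil => simp at hl
  | cons h t =>
    rename_i c
    rw [Walk.cons_isCycle_iff] at hc
    obtain ⟨htp, hxc_ne⟩ := hc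
    rw [Walk.edges_cons, List.mem_cons] at he
    have hlt : t.length = 4 := by simpa using hl
    by_cases hcy : c = y
    · cases hcy.symm
      have hnotin : s(x, y) ∉ t.edges := hxc_ne
      have hall : ∀ e ∈ t.edges, e ∈ G.edgeSet := by
        intro e hee
        have h1 : e ∈ (G ⊔ fromEdgeSet {s(x, y)}).edgeSet := t.edges_subset_edgeSet hee
        rw [edgeSet_sup, edgeSet_fromEdgeSet] at h1
        rcases h1 with h1 | ⟨h1, -⟩
        · exact h1
        · rw [Set.mem_singleton_iff] at h1
          rw [h1] at hee
          exact absurd hee hnotin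
      obtain ⟨-, -, -, hte⟩ := fd.path4 (t.transfer G hall) (htp.transfer hall)
        (by rw [Walk.length_transfer]; exact hlt)
      have htedges : t.edges = [s(y, p y), s(p y, z), s(z, p x), s(p x, x)] :=
        (Walk.edges_transfer t hall).symm.trans hte
      ext e
      rw [Set.mem_setOf_eq, Walk.edges_cons, htedges]
      simp only [List.mem_cons, List.not_mem_nil, or_false, Set.mem_insert_iff,
        Set.mem_singleton_iff]
    · have het : s(x, y) ∈ t.edges := by
        rcases he with he | he
        · exfalso
          rw [Sym2.eq_iff] at he
          rcases he with ⟨-, hyc⟩ | ⟨hxc, -⟩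
          · exact hcy hyc.symm
          · exact h.ne hxc
        · exact he
      obtain ⟨t₂, h2, rfl⟩ := lastEdge t htp het
      have ht2p : t₂.IsPath := by
        have h' := htp
        rw [Walk.concat_eq_append] at h'
        exact h'.of_append_left
      have hxnot : x ∉ t₂.support := by
        have hnd := htp.support_nodup
        rw [Walk.support_concat, List.nodup_append] at hnd
        intro hx
        exact hnd.2.2 x hx x (by simp) rfl
      have hs_not2 : s(x, y) ∉ t₂.edges := by
        have hnd := htp.isTrail.edges_nodup
        rw [Walk.edges_concat, List.concat_eq_append, List.nodup_append] at hnd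
        intro hx
        exact hnd.2.2 _ hx s(y, x) (by simp) Sym2.eq_swap
      have hall2 : ∀ e ∈ t₂.edges, e ∈ G.edgeSet := by
        intro e hee
        have h1 : e ∈ (G ⊔ fromEdgeSet {s(x, y)}).edgeSet := t₂.edges_subset_edgeSet hee
        rw [edgeSet_sup, edgeSet_fromEdgeSet] at h1
        rcases h1 with h1 | ⟨h1, -⟩
        · exact h1
        · rw [Set.mem_singleton_iff] at h1
          rw [h1] at hee
          exact absurd hee hs_not2
      have hxc : G.Adj x c := by
        rcases hG'adj h with h' | h'
        · exact h'
        · exfalso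
          rw [Sym2.eq_iff] at h'
          rcases h' with ⟨-, hyc⟩ | ⟨hxy', -⟩
          · exact hcy hyc
          · exact hxy hxy'
      have h3 : t₂.length = 3 := by
        rw [Walk.length_concat] at hlt; omega
      have hup : (Walk.cons hxc (t₂.transfer G hall2)).IsPath := by
        rw [Walk.cons_isPath_iff]
        exact ⟨ht2p.transfer hall2, by rwa [Walk.support_transfer]⟩
      have hul : (Walk.cons hxc (t₂.transfer G hall2)).length = 4 := by
        rw [Walk.length_cons, Walk.length_transfer, h3]
      obtain ⟨-, -, -, hedg⟩ := fd.path4 _ hup hul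
      rw [Walk.edges_cons, Walk.edges_transfer] at hedg
      obtain ⟨hxc_eq, ht2eq⟩ := List.cons_eq_cons.mp hedg
      have weq : (Walk.cons h (t₂.concat h2)).edges
          = [s(x, p x), s(p x, z), s(z, p y), s(p y, y), s(y, x)] := by
        rw [Walk.edges_cons, Walk.edges_concat, hxc_eq, ht2eq]
        rfl
      rw [show s(x, p x) = s(p x, x) from Sym2.eq_swap,
        show s(p x, z) = s(z, p x) from Sym2.eq_swap,
        show s(z, p y) = s(p y, z) from Sym2.eq_swap,
        show s(p y, y) = s(y, p y) from Sym2.eq_swap,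
        show s(y, x) = s(x, y) from Sym2.eq_swap] at weq
      ext e
      rw [Set.mem_setOf_eq, weq]
      simp only [List.mem_cons, List.not_mem_nil, or_false, Set.mem_insert_iff,
        Set.mem_singleton_iff]
      tauto

end FrData
end Aux

/-- Every friendship graph with at least two triangles (at least five vertices) is
uniquely `C_5`-saturated: it has no cycle on 5 vertices, and adding any edge of the
complement creates exactly one cycle on 5 vertices. -/
theorem stmt_11 {V : Type*} [Fintype V] (G : SimpleGraph V)
    (hn : 5 ≤ Fintype.card V) (hG : IsFriendship G) :
    ¬ HasCycleOn G 5 ∧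
      ∀ x y : V, x ≠ y → ¬ G.Adj x y →
        ∃! c : Set (Sym2 V), IsCtEdgeSet (G ⊔ fromEdgeSet {s(x, y)}) 5 c := by
  classical
  obtain ⟨z, hz, hu⟩ := hG
  simp only [ExistsUnique] at hu
  choose! p hp using hu
  have fd : FrData G z p :=
    ⟨hz, fun v hv => (hp v hv).1.1, fun v hv => (hp v hv).1.2,
      fun v hv u hu2 ha => (hp v hv).2 u ⟨hu2, ha⟩⟩
  refine ⟨fd.noC5, ?_⟩
  intro x y hxy hnadj
  have hxz : x ≠ z := by
    intro heq; subst x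
    exact hnadj (hz y (Ne.symm hxy))
  have hyz : y ≠ z := by
    intro heq; subst y
    exact hnadj ((hz x hxy).symm)
  have hpx := fd.hp2 x hxz
  have hpy := fd.hp2 y hyz
  have hpxz := fd.hp1 x hxz
  have hpyz := fd.hp1 y hyz
  have hxpy : x ≠ p y := by
    intro h; rw [h] at hnadj; exact hnadj hpy.symm
  have hypx : y ≠ p x := by
    intro h; rw [h] at hnadj; exact hnadj hpx
  have hxpx : x ≠ p x := hpx.ne
  have hypy : y ≠ p y := hpy.ne
  have hpxy : p x ≠ p y := by
    intro h; apply hxy; rw [← fd.psym hxz, h, fd.psym hyz]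
  have hyx := hxy.symm
  have hzx := hxz.symm
  have hzy := hyz.symm
  have hpyx := hxpy.symm
  have hpxy' := hypx.symm
  have hpxx := hxpx.symm
  have hpyy := hypy.symm
  have hpypx := hpxy.symm
  have hzpx := hpxz.symm
  have hzpy := hpyz.symm
  have lift : ∀ {u v : V}, G.Adj u v → (G ⊔ fromEdgeSet {s(x, y)}).Adj u v :=
    fun h => (sup_adj _ _ _ _).mpr (Or.inl h)
  have a1 : (G ⊔ fromEdgeSet {s(x, y)}).Adj x y := by
    rw [sup_adj, fromEdgeSet_adj]; exact Or.inr ⟨rfl, hxy⟩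
  have a2 := lift hpy
  have a3 := lift (hz (p y) hpyz).symm
  have a4 := lift (hz (p x) hpxz)
  have a5 := lift hpx.symm
  refine ⟨{s(x, y), s(y, p y), s(p y, z), s(z, p x), s(p x, x)}, ⟨x,
    Walk.cons a1 (Walk.cons a2 (Walk.cons a3 (Walk.cons a4 (Walk.cons a5 Walk.nil)))),
    ?_, by simp, ?_⟩, ?_⟩
  · rw [Walk.isCycle_def, Walk.isTrail_def]
    refine ⟨?_, by simp, ?_⟩
    · simp only [Walk.edges_cons, Walk.edges_nil, List.nodup_cons, List.mem_cons,
        List.not_mem_nil, or_false, List.nodup_nil, and_true, List.mem_singleton,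
        Sym2.eq_iff]
      push_neg
      tauto
    · simp only [Walk.support_cons, Walk.support_nil, List.tail_cons, List.nodup_cons,
        List.mem_cons, List.not_mem_nil, or_false, List.nodup_nil, and_true,
        List.mem_singleton]
      push_neg
      tauto
  · ext e
    simp only [Walk.edges_cons, Walk.edges_nil, Set.mem_setOf_eq, List.mem_cons,
      List.not_mem_nil, or_false, Set.mem_insert_iff, Set.mem_singleton_iff]
  · rintro c ⟨v, w, hcy, hlen, rfl⟩
    have hmem : s(x, y) ∈ w.edges := by
      by_contra hmem
      have hall : ∀ e ∈ w.edges, e ∈ G.edgeSet := by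
        intro e hee
        have h1 := w.edges_subset_edgeSet hee
        rw [edgeSet_sup, edgeSet_fromEdgeSet] at h1
        rcases h1 with h1 | ⟨h1, -⟩
        · exact h1
        · rw [Set.mem_singleton_iff] at h1
          rw [h1] at hee
          exact absurd hee hmem
      exact fd.noC5 ⟨v, w.transfer G hall, hcy.transfer hall,
        by rw [Walk.length_transfer]; exact hlen⟩
    have hxsup : x ∈ w.support := w.fst_mem_support_of_mem_edges hmem
    have hrot := w.rotate_edges x hxsup
    have h5 : (w.rotate x hxsup).length = 5 := by
      rw [← Walk.length_edges, hrot.perm.length_eq, Walk.length_edges]; exact hlen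
    have hset := fd.cycEdges hxy hnadj (w.rotate x hxsup) (hcy.rotate hxsup) h5
      (hrot.mem_iff.mpr hmem)
    rw [← hset]
    ext e
    simp only [Set.mem_setOf_eq]
    exact hrot.mem_iff.symm
end
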